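/- arXiv:math/0510253 — 4 statements merged into one kernel-verified Lean document; each statement's English description precedes it below -/
import Mathlib

section
/- Let H be a Hopf algebra over k and B ⊆ A a right H-extension (A a right H-comodule algebra with coinvariants B). Then B ⊆ A is cleft (there exists a convolution invertible H-colinear map j : H → A) if and only if B ⊆ A is H-Galois (the canonical map A ⊗_B A → A ⊗ H, a ⊗ a' ↦ Σ a a'⁰ ⊗ a'¹, is bijective) and A has the normal basis property (A ≅ B ⊗ H as left B-modules and right H-comodules). -/
open TensorProduct

/-- A right `H`-comodule algebra structure on a `k`-algebra `A`: a coassociative counital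
coaction `ρ : A → A ⊗ H` which is a morphism of algebras. -/
structure ComodAlg (k H A : Type*) [CommRing k] [Ring H] [Bialgebra k H]
    [Ring A] [Algebra k A] where
  ρ : A →ₗ[k] A ⊗[k] H
  coassoc : ∀ a : A,
    TensorProduct.assoc k A H H (TensorProduct.map ρ LinearMap.id (ρ a)) =
      TensorProduct.map LinearMap.id Coalgebra.comul (ρ a)
  counit : ∀ a : A,
    TensorProduct.rid k A (TensorProduct.map LinearMap.id Coalgebra.counit (ρ a)) = a
  map_one : ρ 1 = 1
  map_mul : ∀ a b : A, ρ (a * b) = ρ a * ρ b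

namespace ComodAlg

variable {k H A : Type*} [CommRing k] [Ring H] [Bialgebra k H] [Ring A] [Algebra k A]

/-- The subalgebra of coinvariants `B = {a : ρ(a) = a ⊗ 1}` of a comodule algebra. -/
def coinv (c : ComodAlg k H A) : Subalgebra k A where
  carrier := {a : A | c.ρ a = a ⊗ₜ[k] (1 : H)}
  mul_mem' := by
    intro a b ha hb
    simp only [Set.mem_setOf_eq] at *
    rw [c.map_mul, ha, hb, Algebra.TensorProduct.tmul_mul_tmul, mul_one]
  one_mem' := by
    simp only [Set.mem_setOf_eq, c.map_one, Algebra.TensorProduct.one_def]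
  add_mem' := by
    intro a b ha hb
    simp only [Set.mem_setOf_eq] at *
    rw [map_add, ha, hb, TensorProduct.add_tmul]
  algebraMap_mem' := by
    intro r
    simp only [Set.mem_setOf_eq, Algebra.algebraMap_eq_smul_one, map_smul, c.map_one,
      Algebra.TensorProduct.one_def, TensorProduct.smul_tmul']

end ComodAlg

/-- The convolution product on `Hom_k(H, A)`. -/
noncomputable def conv {k H A : Type*} [CommRing k] [AddCommGroup H] [Module k H]
    [Coalgebra k H] [Ring A] [Algebra k A] (f g : H →ₗ[k] A) : H →ₗ[k] A :=
  LinearMap.mul' k A ∘ₗ TensorProduct.map f g ∘ₗ Coalgebra.comul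

/-- The unit `η ∘ ε` of the convolution algebra. -/
noncomputable def convOne (k H A : Type*) [CommRing k] [AddCommGroup H] [Module k H]
    [Coalgebra k H] [Ring A] [Algebra k A] : H →ₗ[k] A :=
  Algebra.linearMap k A ∘ₗ Coalgebra.counit

namespace ComodAlg

variable {k H A : Type*} [CommRing k] [Ring H] [Bialgebra k H] [Ring A] [Algebra k A]

/-- The submodule of `A ⊗[k] A` generated by the `B`-balancing relators, where
`B` is the coinvariant subalgebra; the quotient is `A ⊗_B A`. -/
def relB (c : ComodAlg k H A) : Submodule k (A ⊗[k] A) :=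
  Submodule.span k
    {z : A ⊗[k] A | ∃ (a a' : A), ∃ b ∈ c.coinv,
      z = (a * b) ⊗ₜ[k] a' - a ⊗ₜ[k] (b * a')}

/-- The lift `A ⊗[k] A → A ⊗[k] H`, `a ⊗ a' ↦ ∑ a a'⁰ ⊗ a'¹`, of the canonical
Galois map. -/
noncomputable def galoisLift (c : ComodAlg k H A) : A ⊗[k] A →ₗ[k] A ⊗[k] H :=
  LinearMap.mul' k (A ⊗[k] H) ∘ₗ
    TensorProduct.map (Algebra.TensorProduct.includeLeft : A →ₐ[k] A ⊗[k] H).toLinearMap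
      c.ρ

end ComodAlg

/-! ### Auxiliary infrastructure -/

section ConvLemmas

variable {k H A : Type*} [CommRing k] [AddCommGroup H] [Module k H] [Coalgebra k H]
  [Ring A] [Algebra k A]

lemma conv_apply_repr (f g : H →ₗ[k] A) {h : H} {ι : Type*} (r : Coalgebra.Repr k h ι) :
    conv f g h = ∑ i ∈ r.index, f (r.left i) * g (r.right i) := by
  simp only [conv, LinearMap.comp_apply, ← r.eq, map_sum, TensorProduct.map_tmul,
    LinearMap.mul'_apply]

lemma convOne_apply (h : H) :
    convOne k H A h = algebraMap k A (Coalgebra.counit h) := rfl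

lemma repr_sum_counit_left_smul {h : H} {ι : Type*} (r : Coalgebra.Repr k h ι) :
    ∑ i ∈ r.index, Coalgebra.counit (R := k) (r.left i) • r.right i = h := by
  have h0 := Coalgebra.sum_counit_tmul_eq r
  calc ∑ i ∈ r.index, Coalgebra.counit (R := k) (r.left i) • r.right i
      = (TensorProduct.lid k H).toLinearMap
          (∑ i ∈ r.index, Coalgebra.counit (R := k) (r.left i) ⊗ₜ[k] r.right i) := by
        rw [map_sum]
        exact Finset.sum_congr rfl fun i _ => by simp
    _ = (TensorProduct.lid k H).toLinearMap (1 ⊗ₜ[k] h) := by rw [h0]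
    _ = h := by simp

lemma repr_sum_counit_right_smul {h : H} {ι : Type*} (r : Coalgebra.Repr k h ι) :
    ∑ i ∈ r.index, Coalgebra.counit (R := k) (r.right i) • r.left i = h := by
  have h0 := Coalgebra.sum_tmul_counit_eq r
  calc ∑ i ∈ r.index, Coalgebra.counit (R := k) (r.right i) • r.left i
      = (TensorProduct.rid k H).toLinearMap
          (∑ i ∈ r.index, r.left i ⊗ₜ[k] Coalgebra.counit (R := k) (r.right i)) := by
        rw [map_sum]
        exact Finset.sum_congr rfl fun i _ => by simp
    _ = (TensorProduct.rid k H).toLinearMap (h ⊗ₜ[k] 1) := by rw [h0]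
    _ = h := by simp

lemma conv_one_left (f : H →ₗ[k] A) : conv (convOne k H A) f = f := by
  ext h
  obtain r := Coalgebra.Repr.arbitrary k h
  rw [conv_apply_repr _ _ r]
  calc ∑ i ∈ r.index, convOne k H A (r.left i) * f (r.right i)
      = ∑ i ∈ r.index, f (Coalgebra.counit (R := k) (r.left i) • r.right i) := by
        simp [convOne_apply, Algebra.smul_def]
    _ = f h := by rw [← map_sum, repr_sum_counit_left_smul r]

lemma conv_one_right (f : H →ₗ[k] A) : conv f (convOne k H A) = f := by
  ext h
  obtain r := Coalgebra.Repr.arbitrary k h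
  rw [conv_apply_repr _ _ r]
  calc ∑ i ∈ r.index, f (r.left i) * convOne k H A (r.right i)
      = ∑ i ∈ r.index, f (Coalgebra.counit (R := k) (r.right i) • r.left i) := by
        refine Finset.sum_congr rfl fun i _ => ?_
        rw [convOne_apply, ← Algebra.commutes, ← Algebra.smul_def, ← map_smul]
    _ = f h := by rw [← map_sum, repr_sum_counit_right_smul r]

lemma conv_assoc (f g h : H →ₗ[k] A) : conv (conv f g) h = conv f (conv g h) := by
  ext x
  obtain r := Coalgebra.Repr.arbitrary k x
  have key := Coalgebra.sum_tmul_tmul_eq r (fun i => Coalgebra.Repr.arbitrary k (r.left i))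
    (fun i => Coalgebra.Repr.arbitrary k (r.right i))
  have lhs : conv (conv f g) h x = ∑ i ∈ r.index,
      ∑ j ∈ (Coalgebra.Repr.arbitrary k (r.left i)).index,
        f ((Coalgebra.Repr.arbitrary k (r.left i)).left j) *
          g ((Coalgebra.Repr.arbitrary k (r.left i)).right j) * h (r.right i) := by
    rw [conv_apply_repr _ _ r]
    refine Finset.sum_congr rfl fun i _ => ?_
    rw [conv_apply_repr _ _ (Coalgebra.Repr.arbitrary k (r.left i)), Finset.sum_mul]
  have rhs : conv f (conv g h) x = ∑ i ∈ r.index,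
      ∑ j ∈ (Coalgebra.Repr.arbitrary k (r.right i)).index,
        f (r.left i) * (g ((Coalgebra.Repr.arbitrary k (r.right i)).left j) *
          h ((Coalgebra.Repr.arbitrary k (r.right i)).right j)) := by
    rw [conv_apply_repr _ _ r]
    refine Finset.sum_congr rfl fun i _ => ?_
    rw [conv_apply_repr _ _ (Coalgebra.Repr.arbitrary k (r.right i)), Finset.mul_sum]
  rw [lhs, rhs]
  have := congrArg (LinearMap.mul' k A ∘ₗ TensorProduct.map f
    (LinearMap.mul' k A ∘ₗ TensorProduct.map g h)) key
  simpa [map_sum, LinearMap.mul'_apply, mul_assoc] using this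

end ConvLemmas

namespace ComodAlg

variable {k H A : Type*} [CommRing k] [Ring H] [Bialgebra k H] [Ring A] [Algebra k A]
variable (c : ComodAlg k H A)

/-- A finite representation of the coaction of `a`. -/
structure CoRepr (a : A) where
  {ι : Type*}
  index : Finset ι
  left : ι → A
  right : ι → H
  eq : ∑ i ∈ index, left i ⊗ₜ[k] right i = c.ρ a

variable {c}

/-- An arbitrarily chosen representation of the coaction. -/
noncomputable def coRepr (a : A) : c.CoRepr a :=
  ⟨(TensorProduct.exists_finset (c.ρ a)).choose, Prod.fst, Prod.snd,
    (TensorProduct.exists_finset (c.ρ a)).choose_spec.symm⟩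

lemma CoRepr.counit_eq {a : A} (r : c.CoRepr a) :
    ∑ i ∈ r.index, Coalgebra.counit (R := k) (r.right i) • r.left i = a := by
  have := c.counit a
  rw [← r.eq] at this
  simpa [map_sum, mul_comm] using this

/-- Element form of comodule coassociativity. -/
lemma CoRepr.coassoc_eq {a : A} (r : c.CoRepr a) (s : ∀ i, c.CoRepr (r.left i))
    {κ : Type*} (t : ∀ i, Coalgebra.Repr k (r.right i) κ) :
    ∑ i ∈ r.index, ∑ j ∈ (s i).index,
        (s i).left j ⊗ₜ[k] ((s i).right j ⊗ₜ[k] r.right i) =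
      ∑ i ∈ r.index, ∑ j ∈ (t i).index,
        r.left i ⊗ₜ[k] ((t i).left j ⊗ₜ[k] (t i).right j) := by
  have h := c.coassoc a
  rw [← r.eq] at h
  calc ∑ i ∈ r.index, ∑ j ∈ (s i).index,
        (s i).left j ⊗ₜ[k] ((s i).right j ⊗ₜ[k] r.right i)
      = (TensorProduct.assoc k A H H).toLinearMap
          (TensorProduct.map c.ρ LinearMap.id (∑ i ∈ r.index, r.left i ⊗ₜ[k] r.right i)) := by
        rw [map_sum, map_sum]
        refine Finset.sum_congr rfl fun i _ => ?_
        rw [TensorProduct.map_tmul, ← (s i).eq, LinearMap.id_coe, id_eq,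
          TensorProduct.sum_tmul, map_sum]
        exact Finset.sum_congr rfl fun j _ => by simp
    _ = TensorProduct.map LinearMap.id Coalgebra.comul
          (∑ i ∈ r.index, r.left i ⊗ₜ[k] r.right i) := h
    _ = ∑ i ∈ r.index, ∑ j ∈ (t i).index,
        r.left i ⊗ₜ[k] ((t i).left j ⊗ₜ[k] (t i).right j) := by
        rw [map_sum]
        refine Finset.sum_congr rfl fun i _ => ?_
        rw [TensorProduct.map_tmul, ← (t i).eq, LinearMap.id_coe, id_eq,
          TensorProduct.tmul_sum]

lemma rho_repr {a : A} (r : c.CoRepr a) : c.ρ a = ∑ i ∈ r.index, r.left i ⊗ₜ[k] r.right i :=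
  r.eq.symm

lemma mem_coinv_iff {a : A} : a ∈ c.coinv ↔ c.ρ a = a ⊗ₜ[k] 1 := Iff.rfl

lemma rho_coinv_mul {b x : A} (hb : b ∈ c.coinv) : c.ρ (b * x) = (b ⊗ₜ[k] 1) * c.ρ x := by
  rw [c.map_mul, mem_coinv_iff.1 hb]

end ComodAlg

namespace ComodAlg

variable {k H A : Type*} [CommRing k] [Ring H] [Bialgebra k H] [Ring A] [Algebra k A]
variable {c : ComodAlg k H A}

section Cleft

variable (c) (j jt : H →ₗ[k] A)

/-- `κ a = ∑ a⁰ jt(a¹)`. -/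
noncomputable def kappa : A →ₗ[k] A :=
  LinearMap.mul' k A ∘ₗ LinearMap.lTensor A jt ∘ₗ c.ρ

variable {c j jt}

lemma kappa_repr {a : A} (r : c.CoRepr a) :
    kappa c jt a = ∑ i ∈ r.index, r.left i * jt (r.right i) := by
  simp only [kappa, LinearMap.comp_apply, ← r.eq, map_sum, LinearMap.lTensor_tmul,
    LinearMap.mul'_apply]

/-- A representation of the coaction of `j h` coming from colinearity of `j`. -/
noncomputable def colinearCoRepr
    (hj : ∀ h : H, c.ρ (j h) =
      TensorProduct.map j LinearMap.id (Coalgebra.comul (R := k) h))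
    {h : H} {ι : Type*} (r : Coalgebra.Repr k h ι) : c.CoRepr (j h) where
  index := r.index
  left := fun i => j (r.left i)
  right := r.right
  eq := by rw [hj, ← r.eq, map_sum]; simp

variable (hj : ∀ h : H, c.ρ (j h) =
    TensorProduct.map j LinearMap.id (Coalgebra.comul (R := k) h))
  (h1 : conv j jt = convOne k H A) (h2 : conv jt j = convOne k H A)

lemma rho_conv (f g : H →ₗ[k] A) :
    c.ρ ∘ₗ conv f g = conv (c.ρ ∘ₗ f) (c.ρ ∘ₗ g) := by
  ext h
  obtain r := Coalgebra.Repr.arbitrary k h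
  simp only [LinearMap.comp_apply, conv_apply_repr _ _ r, map_sum, c.map_mul]

lemma rho_convOne : c.ρ ∘ₗ convOne k H A = convOne k H (A ⊗[k] H) := by
  ext h
  simp only [LinearMap.comp_apply, convOne_apply, Algebra.algebraMap_eq_smul_one,
    map_smul, c.map_one]

/-- `u h = jt h ⊗ 1`. -/
noncomputable def uMap (jt : H →ₗ[k] A) : H →ₗ[k] A ⊗[k] H :=
  ((TensorProduct.mk k A H).flip 1) ∘ₗ jt

/-- `f₁ h = 1 ⊗ h`. -/
noncomputable def fOne : H →ₗ[k] A ⊗[k] H := TensorProduct.mk k A H 1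

lemma uMap_apply (h : H) : uMap jt h = jt h ⊗ₜ[k] 1 := rfl

lemma fOne_apply (h : H) : fOne (A := A) h = 1 ⊗ₜ[k] h := rfl

include hj h2 in
lemma conv_u_rhoj : conv (uMap jt) (c.ρ ∘ₗ j) = fOne := by
  ext h
  obtain r := Coalgebra.Repr.arbitrary k h
  set s := fun i => Coalgebra.Repr.arbitrary k (r.left i)
  set t := fun i => Coalgebra.Repr.arbitrary k (r.right i)
  have key := congrArg ((TensorProduct.map ((LinearMap.mul' k A) ∘ₗ TensorProduct.map jt j)
      LinearMap.id) ∘ₗ (TensorProduct.assoc k H H H).symm.toLinearMap)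
    (Coalgebra.sum_tmul_tmul_eq r s t)
  simp only [map_sum, LinearMap.comp_apply, LinearEquiv.coe_coe,
    TensorProduct.assoc_symm_tmul, TensorProduct.map_tmul, LinearMap.mul'_apply,
    LinearMap.id_coe, id_eq] at key
  have lhs : ∑ i ∈ r.index, ∑ j_1 ∈ (s i).index,
      (jt ((s i).left j_1) * j ((s i).right j_1)) ⊗ₜ[k] r.right i = 1 ⊗ₜ[k] h := by
    calc ∑ i ∈ r.index, ∑ j_1 ∈ (s i).index,
        (jt ((s i).left j_1) * j ((s i).right j_1)) ⊗ₜ[k] r.right i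
        = ∑ i ∈ r.index, (conv jt j (r.left i)) ⊗ₜ[k] r.right i := by
          refine Finset.sum_congr rfl fun i _ => ?_
          rw [conv_apply_repr _ _ (s i), TensorProduct.sum_tmul]
      _ = ∑ i ∈ r.index, (Coalgebra.counit (R := k) (r.left i) •
            (1 : A)) ⊗ₜ[k] r.right i := by
          simp [h2, convOne_apply, Algebra.algebraMap_eq_smul_one]
      _ = (1 : A) ⊗ₜ[k] ∑ i ∈ r.index, Coalgebra.counit (R := k) (r.left i) • r.right i := by
          rw [TensorProduct.tmul_sum]
          exact Finset.sum_congr rfl fun i _ => by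
            rw [TensorProduct.tmul_smul, TensorProduct.smul_tmul']
      _ = 1 ⊗ₜ[k] h := by rw [repr_sum_counit_left_smul r]
  rw [lhs] at key
  have rhs : conv (uMap jt) (c.ρ ∘ₗ j) h = ∑ i ∈ r.index, ∑ j_1 ∈ (t i).index,
      (jt (r.left i) * j ((t i).left j_1)) ⊗ₜ[k] (t i).right j_1 := by
    rw [conv_apply_repr _ _ r]
    refine Finset.sum_congr rfl fun i _ => ?_
    rw [LinearMap.comp_apply, hj, ← (t i).eq, map_sum, uMap_apply, Finset.mul_sum]
    refine Finset.sum_congr rfl fun j_1 _ => ?_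
    simp [Algebra.TensorProduct.tmul_mul_tmul]
  rw [rhs, ← key, fOne_apply]

include hj h1 h2 in
lemma conv_fOne_rhojt : conv (fOne (A := A)) (c.ρ ∘ₗ jt) = uMap jt := by
  have hvg : conv (c.ρ ∘ₗ j) (c.ρ ∘ₗ jt) = convOne k H (A ⊗[k] H) := by
    rw [← rho_conv, h1, rho_convOne]
  calc conv fOne (c.ρ ∘ₗ jt)
      = conv (conv (uMap jt) (c.ρ ∘ₗ j)) (c.ρ ∘ₗ jt) := by rw [conv_u_rhoj hj h2]
    _ = conv (uMap jt) (conv (c.ρ ∘ₗ j) (c.ρ ∘ₗ jt)) := conv_assoc _ _ _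
    _ = uMap jt := by rw [hvg, conv_one_right]

include hj h1 h2 in
lemma kappa_mem_coinv (a : A) : kappa c jt a ∈ c.coinv := by
  rw [mem_coinv_iff]
  obtain r := coRepr (c := c) a
  set s := fun i => coRepr (c := c) (r.left i)
  set t := fun i => Coalgebra.Repr.arbitrary k (r.right i)
  set g := c.ρ ∘ₗ jt with hg
  have key := congrArg ((LinearMap.mul' k (A ⊗[k] H)) ∘ₗ
      (LinearMap.lTensor (A ⊗[k] H) g) ∘ₗ (TensorProduct.assoc k A H H).symm.toLinearMap)
    (CoRepr.coassoc_eq r s t)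
  simp only [map_sum, LinearMap.comp_apply, LinearEquiv.coe_coe,
    TensorProduct.assoc_symm_tmul, LinearMap.lTensor_tmul, LinearMap.mul'_apply] at key
  -- key : ∑∑ ((s i).left j ⊗ (s i).right j) * g (r.right i)
  --     = ∑∑ (r.left i ⊗ (t i).left j) * g ((t i).right j)
  have lhs : c.ρ (kappa c jt a) = ∑ i ∈ r.index, ∑ j_1 ∈ (s i).index,
      ((s i).left j_1 ⊗ₜ[k] (s i).right j_1) * g (r.right i) := by
    rw [kappa_repr r, map_sum]
    refine Finset.sum_congr rfl fun i _ => ?_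
    rw [c.map_mul, ← (s i).eq, Finset.sum_mul]
    rfl
  have rhs : kappa c jt a ⊗ₜ[k] (1 : H) = ∑ i ∈ r.index, ∑ j_1 ∈ (t i).index,
      (r.left i ⊗ₜ[k] (t i).left j_1) * g ((t i).right j_1) := by
    have hu : ∀ i ∈ r.index, (r.left i * jt (r.right i)) ⊗ₜ[k] (1 : H) =
        (r.left i ⊗ₜ[k] (1 : H)) * uMap jt (r.right i) := fun i _ => by
      rw [uMap_apply, Algebra.TensorProduct.tmul_mul_tmul, one_mul]
    rw [kappa_repr r, TensorProduct.sum_tmul, Finset.sum_congr rfl hu]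
    refine Finset.sum_congr rfl fun i _ => ?_
    rw [← conv_fOne_rhojt hj h1 h2, conv_apply_repr _ _ (t i), Finset.mul_sum]
    refine Finset.sum_congr rfl fun j_1 _ => ?_
    rw [fOne_apply, ← mul_assoc, Algebra.TensorProduct.tmul_mul_tmul, mul_one, one_mul]
  rw [lhs, rhs]
  exact key

include h2 in
lemma sum_kappa_j {a : A} (r : c.CoRepr a) :
    ∑ i ∈ r.index, kappa c jt (r.left i) * j (r.right i) = a := by
  set s := fun i => coRepr (c := c) (r.left i)
  set t := fun i => Coalgebra.Repr.arbitrary k (r.right i)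
  have key := congrArg ((LinearMap.mul' k A) ∘ₗ
      (TensorProduct.map LinearMap.id ((LinearMap.mul' k A) ∘ₗ TensorProduct.map jt j)))
    (CoRepr.coassoc_eq r s t)
  simp only [map_sum, LinearMap.comp_apply, TensorProduct.map_tmul, LinearMap.mul'_apply,
    LinearMap.id_coe, id_eq] at key
  calc ∑ i ∈ r.index, kappa c jt (r.left i) * j (r.right i)
      = ∑ i ∈ r.index, ∑ j_1 ∈ (s i).index,
          (s i).left j_1 * ((jt ((s i).right j_1)) * j (r.right i)) := by
        refine Finset.sum_congr rfl fun i _ => ?_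
        rw [kappa_repr (s i), Finset.sum_mul]
        exact Finset.sum_congr rfl fun j_1 _ => by rw [mul_assoc]
    _ = ∑ i ∈ r.index, ∑ j_1 ∈ (t i).index,
          r.left i * (jt ((t i).left j_1) * j ((t i).right j_1)) := key
    _ = ∑ i ∈ r.index, r.left i * conv jt j (r.right i) := by
        refine Finset.sum_congr rfl fun i _ => ?_
        rw [conv_apply_repr _ _ (t i), Finset.mul_sum]
    _ = a := by
        rw [h2]
        calc ∑ i ∈ r.index, r.left i * convOne k H A (r.right i)
            = ∑ i ∈ r.index, Coalgebra.counit (R := k) (r.right i) • r.left i := by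
              refine Finset.sum_congr rfl fun i _ => ?_
              rw [convOne_apply, ← Algebra.commutes, ← Algebra.smul_def]
          _ = a := r.counit_eq
  
include hj h1 in
lemma kappa_j (h : H) :
    kappa c jt (j h) = algebraMap k A (Coalgebra.counit h) := by
  obtain r := Coalgebra.Repr.arbitrary k h
  rw [kappa_repr (colinearCoRepr hj r), ← convOne_apply, ← h1, conv_apply_repr _ _ r]
  rfl

lemma kappa_coinv_mul {b : A} (hb : b ∈ c.coinv) (x : A) :
    kappa c jt (b * x) = b * kappa c jt x := by
  obtain r := coRepr (c := c) x
  have heq : ∑ i ∈ r.index, (b * r.left i) ⊗ₜ[k] r.right i = c.ρ (b * x) := by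
    rw [rho_coinv_mul hb, ← r.eq, Finset.mul_sum]
    exact Finset.sum_congr rfl fun i _ => by
      rw [Algebra.TensorProduct.tmul_mul_tmul, one_mul]
  rw [kappa_repr (⟨r.index, fun i => b * r.left i, r.right, heq⟩ : c.CoRepr (b * x)),
    kappa_repr r, Finset.mul_sum]
  show ∑ i ∈ r.index, b * r.left i * jt (r.right i) =
    ∑ i ∈ r.index, b * (r.left i * jt (r.right i))
  exact Finset.sum_congr rfl fun i _ => mul_assoc _ _ _

end Cleft

end ComodAlg

namespace ComodAlg

variable {k H A : Type*} [CommRing k] [Ring H] [Bialgebra k H] [Ring A] [Algebra k A]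
variable {c : ComodAlg k H A}

lemma galoisLift_tmul (x y : A) :
    c.galoisLift (x ⊗ₜ[k] y) = (x ⊗ₜ[k] (1 : H)) * c.ρ y := by
  simp [galoisLift, LinearMap.mul'_apply]

lemma mkQ_relB {b : A} (hb : b ∈ c.coinv) (x y : A) :
    c.relB.mkQ ((x * b) ⊗ₜ[k] y) = c.relB.mkQ (x ⊗ₜ[k] (b * y)) := by
  rw [Submodule.mkQ_apply, Submodule.mkQ_apply, Submodule.Quotient.eq]
  exact Submodule.subset_span ⟨x, y, b, hb, rfl⟩

lemma relB_le_ker : c.relB ≤ LinearMap.ker c.galoisLift := by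
  rw [relB, Submodule.span_le]
  rintro z ⟨a, a', b, hb, rfl⟩
  simp only [SetLike.mem_coe, LinearMap.mem_ker, map_sub, galoisLift_tmul, sub_eq_zero]
  rw [c.map_mul, mem_coinv_iff.1 hb, ← mul_assoc, Algebra.TensorProduct.tmul_mul_tmul,
    mul_one]

section Forward

variable (j jt : H →ₗ[k] A)
variable (hj : ∀ h : H, c.ρ (j h) =
    TensorProduct.map j LinearMap.id (Coalgebra.comul (R := k) h))
  (h1 : conv j jt = convOne k H A) (h2 : conv jt j = convOne k H A)

variable (c) in
/-- Candidate inverse `a ⊗ h ↦ ∑ (a * jt h₁) ⊗ j h₂` of the Galois map. -/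
noncomputable def galoisInvLift (jt' j' : H →ₗ[k] A) : A ⊗[k] H →ₗ[k] A ⊗[k] A :=
  LinearMap.rTensor A (LinearMap.mul' k A) ∘ₗ (TensorProduct.assoc k A A A).symm.toLinearMap ∘ₗ
    LinearMap.lTensor A (TensorProduct.map jt' j' ∘ₗ Coalgebra.comul)

lemma galoisInvLift_tmul (a : A) {h : H} {ι : Type*} (r : Coalgebra.Repr k h ι) :
    galoisInvLift jt j (a ⊗ₜ[k] h) =
      ∑ i ∈ r.index, (a * jt (r.left i)) ⊗ₜ[k] j (r.right i) := by
  simp only [galoisInvLift, LinearMap.comp_apply, LinearMap.lTensor_tmul, ← r.eq, map_sum,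
    TensorProduct.map_tmul, TensorProduct.tmul_sum, LinearEquiv.coe_coe,
    TensorProduct.assoc_symm_tmul, LinearMap.rTensor_tmul, LinearMap.mul'_apply]

include hj h2 in
lemma can_inv (a : A) (h : H) :
    c.galoisLift (galoisInvLift jt j (a ⊗ₜ[k] h)) = a ⊗ₜ[k] h := by
  obtain r := Coalgebra.Repr.arbitrary k h
  rw [galoisInvLift_tmul _ _ _ r, map_sum]
  have : ∀ i ∈ r.index, c.galoisLift ((a * jt (r.left i)) ⊗ₜ[k] j (r.right i)) =
      (a ⊗ₜ[k] (1 : H)) * (uMap jt (r.left i) * (c.ρ ∘ₗ j) (r.right i)) := by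
    intro i _
    rw [galoisLift_tmul, uMap_apply, LinearMap.comp_apply, ← mul_assoc,
      Algebra.TensorProduct.tmul_mul_tmul, mul_one]
  rw [Finset.sum_congr rfl this, ← Finset.mul_sum, ← conv_apply_repr _ _ r,
    conv_u_rhoj hj h2, fOne_apply, Algebra.TensorProduct.tmul_mul_tmul, mul_one, one_mul]

include hj h1 h2 in
lemma inv_can (w : A ⊗[k] A) :
    c.relB.mkQ (galoisInvLift jt j (c.galoisLift w)) = c.relB.mkQ w := by
  induction w using TensorProduct.induction_on with
  | zero => simp
  | add u v hu hv => rw [map_add, map_add, map_add, map_add, hu, hv]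
  | tmul x y =>
    obtain r := coRepr (c := c) y
    set s := fun i => coRepr (c := c) (r.left i)
    set t := fun i => Coalgebra.Repr.arbitrary k (r.right i)
    have hgal : c.galoisLift (x ⊗ₜ[k] y) = ∑ i ∈ r.index, (x * r.left i) ⊗ₜ[k] r.right i := by
      rw [galoisLift_tmul, rho_repr r, Finset.mul_sum]
      exact Finset.sum_congr rfl fun i _ => by
        rw [Algebra.TensorProduct.tmul_mul_tmul, one_mul]
    have expand : c.relB.mkQ (galoisInvLift jt j (c.galoisLift (x ⊗ₜ[k] y))) =
        ∑ i ∈ r.index, ∑ j_1 ∈ (t i).index,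
          c.relB.mkQ ((x * (r.left i * jt ((t i).left j_1))) ⊗ₜ[k] j ((t i).right j_1)) := by
      rw [hgal, map_sum, map_sum]
      refine Finset.sum_congr rfl fun i _ => ?_
      rw [galoisInvLift_tmul _ _ _ (t i), map_sum]
      exact Finset.sum_congr rfl fun j_1 _ => by rw [mul_assoc]
    have key := congrArg (c.relB.mkQ ∘ₗ
        TensorProduct.map (LinearMap.mulLeft k x) LinearMap.id ∘ₗ
        TensorProduct.map ((LinearMap.mul' k A) ∘ₗ LinearMap.lTensor A jt) j ∘ₗ
        (TensorProduct.assoc k A H H).symm.toLinearMap)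
      (CoRepr.coassoc_eq r s t)
    simp only [map_sum, LinearMap.comp_apply, LinearEquiv.coe_coe,
      TensorProduct.assoc_symm_tmul, TensorProduct.map_tmul, LinearMap.lTensor_tmul,
      LinearMap.mul'_apply, LinearMap.mulLeft_apply, LinearMap.id_coe, id_eq] at key
    have lhs : ∑ i ∈ r.index, ∑ j_1 ∈ (s i).index,
        c.relB.mkQ ((x * ((s i).left j_1 * jt ((s i).right j_1))) ⊗ₜ[k] j (r.right i)) =
        c.relB.mkQ (x ⊗ₜ[k] y) := by
      have step1 : ∀ i ∈ r.index, ∑ j_1 ∈ (s i).index,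
          c.relB.mkQ ((x * ((s i).left j_1 * jt ((s i).right j_1))) ⊗ₜ[k] j (r.right i)) =
          c.relB.mkQ ((x * kappa c jt (r.left i)) ⊗ₜ[k] j (r.right i)) := by
        intro i _
        rw [kappa_repr (s i), Finset.mul_sum, TensorProduct.sum_tmul, map_sum]
      rw [Finset.sum_congr rfl step1]
      have step2 : ∀ i ∈ r.index,
          c.relB.mkQ ((x * kappa c jt (r.left i)) ⊗ₜ[k] j (r.right i)) =
          c.relB.mkQ (x ⊗ₜ[k] (kappa c jt (r.left i) * j (r.right i))) := fun i _ =>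
        mkQ_relB (kappa_mem_coinv hj h1 h2 (r.left i)) x (j (r.right i))
      rw [Finset.sum_congr rfl step2, ← map_sum, ← TensorProduct.tmul_sum,
        sum_kappa_j h2 r]
    rw [expand, ← key, lhs]

end Forward
end ComodAlg

namespace ComodAlg

variable {k H A : Type*} [CommRing k] [Ring H] [Bialgebra k H] [Ring A] [Algebra k A]
variable {c : ComodAlg k H A}

section ForwardNB

variable (j jt : H →ₗ[k] A)
variable (hj : ∀ h : H, c.ρ (j h) =
    TensorProduct.map j LinearMap.id (Coalgebra.comul (R := k) h))
  (h1 : conv j jt = convOne k H A) (h2 : conv jt j = convOne k H A)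

variable (c) in
/-- `κ` corestricted to the coinvariants. -/
noncomputable def kappaB
    (hmem : ∀ a : A, kappa c jt a ∈ c.coinv) : A →ₗ[k] ↥c.coinv :=
  LinearMap.codRestrict (Subalgebra.toSubmodule c.coinv) (kappa c jt) hmem

lemma kappaB_coe (hmem : ∀ a : A, kappa c jt a ∈ c.coinv) (a : A) :
    (kappaB c jt hmem a : A) = kappa c jt a := rfl

variable (c) in
/-- The normal-basis isomorphism `a ↦ ∑ κ(a⁰) ⊗ a¹`. -/
noncomputable def phiF (hmem : ∀ a : A, kappa c jt a ∈ c.coinv) :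
    A →ₗ[k] ↥c.coinv ⊗[k] H :=
  LinearMap.rTensor H (kappaB c jt hmem) ∘ₗ c.ρ

variable (c) in
/-- The inverse normal-basis map `b ⊗ h ↦ b * j h`. -/
noncomputable def psiF : ↥c.coinv ⊗[k] H →ₗ[k] A :=
  LinearMap.mul' k A ∘ₗ TensorProduct.map c.coinv.val.toLinearMap j

lemma psiF_tmul (b : ↥c.coinv) (h : H) : psiF c j (b ⊗ₜ[k] h) = (b : A) * j h := rfl

lemma phiF_repr (hmem : ∀ a : A, kappa c jt a ∈ c.coinv) {a : A} (r : c.CoRepr a) :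
    phiF c jt hmem a = ∑ i ∈ r.index, kappaB c jt hmem (r.left i) ⊗ₜ[k] r.right i := by
  simp only [phiF, LinearMap.comp_apply, ← r.eq, map_sum, LinearMap.rTensor_tmul]

include h2 in
lemma psiF_phiF (hmem : ∀ a : A, kappa c jt a ∈ c.coinv) (a : A) :
    psiF c j (phiF c jt hmem a) = a := by
  obtain r := coRepr (c := c) a
  rw [phiF_repr _ _ r, map_sum]
  calc ∑ i ∈ r.index, psiF c j (kappaB c jt hmem (r.left i) ⊗ₜ[k] r.right i)
      = ∑ i ∈ r.index, kappa c jt (r.left i) * j (r.right i) :=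
        Finset.sum_congr rfl fun i _ => by rw [psiF_tmul, kappaB_coe]
    _ = a := sum_kappa_j h2 r

include hj h1 in
lemma phiF_psiF (hmem : ∀ a : A, kappa c jt a ∈ c.coinv) (b : ↥c.coinv) (h : H) :
    phiF c jt hmem (psiF c j (b ⊗ₜ[k] h)) = b ⊗ₜ[k] h := by
  obtain r := Coalgebra.Repr.arbitrary k h
  have heq : ∑ i ∈ r.index, ((b : A) * j (r.left i)) ⊗ₜ[k] r.right i =
      c.ρ ((b : A) * j h) := by
    rw [rho_coinv_mul b.2, hj, ← r.eq, map_sum, Finset.mul_sum]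
    refine Finset.sum_congr rfl fun i _ => ?_
    rw [TensorProduct.map_tmul, LinearMap.id_coe, id_eq,
      Algebra.TensorProduct.tmul_mul_tmul, one_mul]
  rw [psiF_tmul, phiF_repr _ _
    (⟨r.index, fun i => (b : A) * j (r.left i), r.right, heq⟩ : c.CoRepr ((b : A) * j h))]
  show ∑ i ∈ r.index, kappaB c jt hmem ((b : A) * j (r.left i)) ⊗ₜ[k] r.right i =
    b ⊗ₜ[k] h
  have hk : ∀ i ∈ r.index, kappaB c jt hmem ((b : A) * j (r.left i)) =
      Coalgebra.counit (R := k) (r.left i) • b := by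
    intro i _
    have hthis : kappa c jt ((b : A) * j (r.left i)) =
        (b : A) * algebraMap k A (Coalgebra.counit (R := k) (r.left i)) := by
      rw [kappa_coinv_mul b.2, kappa_j hj h1]
    apply Subtype.ext
    rw [kappaB_coe, hthis, ← Algebra.commutes, ← Algebra.smul_def]
    rfl
  calc ∑ i ∈ r.index, kappaB c jt hmem ((b : A) * j (r.left i)) ⊗ₜ[k] r.right i
      = ∑ i ∈ r.index, (Coalgebra.counit (R := k) (r.left i) • b) ⊗ₜ[k] r.right i :=
        Finset.sum_congr rfl fun i hi => by rw [hk i hi]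
    _ = ∑ i ∈ r.index, b ⊗ₜ[k] (Coalgebra.counit (R := k) (r.left i) • r.right i) :=
        Finset.sum_congr rfl fun i _ => TensorProduct.smul_tmul _ _ _
    _ = b ⊗ₜ[k] ∑ i ∈ r.index, Coalgebra.counit (R := k) (r.left i) • r.right i := by
        rw [TensorProduct.tmul_sum]
    _ = b ⊗ₜ[k] h := by rw [repr_sum_counit_left_smul r]

include hj h1 in
lemma phiF_coinv_mul (hmem : ∀ a : A, kappa c jt a ∈ c.coinv) (b : ↥c.coinv) (a : A) :
    phiF c jt hmem ((b : A) * a) =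
      TensorProduct.map (LinearMap.mulLeft k b) LinearMap.id (phiF c jt hmem a) := by
  obtain r := coRepr (c := c) a
  have heq : ∑ i ∈ r.index, ((b : A) * r.left i) ⊗ₜ[k] r.right i =
      c.ρ ((b : A) * a) := by
    rw [rho_coinv_mul b.2, ← r.eq, Finset.mul_sum]
    refine Finset.sum_congr rfl fun i _ => ?_
    rw [Algebra.TensorProduct.tmul_mul_tmul, one_mul]
  rw [phiF_repr _ _
    (⟨r.index, fun i => (b : A) * r.left i, r.right, heq⟩ : c.CoRepr ((b : A) * a)),
    phiF_repr _ _ r, map_sum]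
  show ∑ i ∈ r.index, kappaB c jt hmem ((b : A) * r.left i) ⊗ₜ[k] r.right i = _
  refine Finset.sum_congr rfl fun i _ => ?_
  rw [TensorProduct.map_tmul, LinearMap.id_coe, id_eq]
  congr 1
  apply Subtype.ext
  rw [kappaB_coe, kappa_coinv_mul b.2]
  rfl

lemma phiF_colinear (hmem : ∀ a : A, kappa c jt a ∈ c.coinv) (a : A) :
    (TensorProduct.assoc k (↥c.coinv) H H).symm
        (TensorProduct.map LinearMap.id Coalgebra.comul (phiF c jt hmem a)) =
      TensorProduct.map (phiF c jt hmem) LinearMap.id (c.ρ a) := by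
  obtain r := coRepr (c := c) a
  set s := fun i => coRepr (c := c) (r.left i)
  set t := fun i => Coalgebra.Repr.arbitrary k (r.right i)
  have key := congrArg (TensorProduct.map
      (TensorProduct.map (kappaB c jt hmem) LinearMap.id) LinearMap.id ∘ₗ
      (TensorProduct.assoc k A H H).symm.toLinearMap)
    (CoRepr.coassoc_eq r s t)
  simp only [map_sum, LinearMap.comp_apply, LinearEquiv.coe_coe,
    TensorProduct.assoc_symm_tmul, TensorProduct.map_tmul, LinearMap.id_coe, id_eq] at key
  have lhs : (TensorProduct.assoc k (↥c.coinv) H H).symm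
      (TensorProduct.map LinearMap.id Coalgebra.comul (phiF c jt hmem a)) =
      ∑ i ∈ r.index, ∑ j_1 ∈ (t i).index,
        (kappaB c jt hmem (r.left i) ⊗ₜ[k] (t i).left j_1) ⊗ₜ[k] (t i).right j_1 := by
    rw [phiF_repr _ _ r, map_sum, ← LinearEquiv.coe_toLinearMap, map_sum]
    refine Finset.sum_congr rfl fun i _ => ?_
    rw [TensorProduct.map_tmul, LinearMap.id_coe, id_eq, ← (t i).eq,
      TensorProduct.tmul_sum, map_sum]
    exact Finset.sum_congr rfl fun j_1 _ => by simp
  have rhs : TensorProduct.map (phiF c jt hmem) LinearMap.id (c.ρ a) =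
      ∑ i ∈ r.index, ∑ j_1 ∈ (s i).index,
        (kappaB c jt hmem ((s i).left j_1) ⊗ₜ[k] (s i).right j_1) ⊗ₜ[k] r.right i := by
    rw [rho_repr r, map_sum]
    refine Finset.sum_congr rfl fun i _ => ?_
    rw [TensorProduct.map_tmul, LinearMap.id_coe, id_eq, phiF_repr _ _ (s i),
      TensorProduct.sum_tmul]
  rw [lhs, rhs, ← key]

end ForwardNB
end ComodAlg

namespace ComodAlg

variable {k H A : Type*} [CommRing k] [Ring H] [Bialgebra k H] [Ring A] [Algebra k A]
variable {c : ComodAlg k H A}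

section Backward

variable (c) (φ : A ≃ₗ[k] ↥c.coinv ⊗[k] H)

/-- `j h = φ⁻¹(1 ⊗ h)`. -/
noncomputable def jB : H →ₗ[k] A :=
  φ.symm.toLinearMap ∘ₗ TensorProduct.mk k (↥c.coinv) H 1

/-- `E = (id ⊗ ε) ∘ φ : A → B`. -/
noncomputable def EB : A →ₗ[k] ↥c.coinv :=
  (TensorProduct.rid k (↥c.coinv)).toLinearMap ∘ₗ
    LinearMap.lTensor (↥c.coinv) (Coalgebra.counit (R := k)) ∘ₗ φ.toLinearMap

/-- `E` viewed as a map `A → A`. -/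
noncomputable def EA : A →ₗ[k] A := c.coinv.val.toLinearMap ∘ₗ EB c φ

variable {c φ}

lemma jB_apply (h : H) : jB c φ h = φ.symm ((1 : ↥c.coinv) ⊗ₜ[k] h) := rfl

lemma EB_eq_sum {a : A} {ι : Type*} (ix : Finset ι) (f : ι → ↥c.coinv) (g : ι → H)
    (hS : φ a = ∑ i ∈ ix, f i ⊗ₜ[k] g i) :
    EB c φ a = ∑ i ∈ ix, Coalgebra.counit (R := k) (g i) • f i := by
  simp only [EB, LinearMap.comp_apply, LinearEquiv.coe_toLinearMap, hS, map_sum,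
    LinearMap.lTensor_tmul, TensorProduct.rid_tmul]

lemma EA_eq_sum {a : A} {ι : Type*} (ix : Finset ι) (f : ι → ↥c.coinv) (g : ι → H)
    (hS : φ a = ∑ i ∈ ix, f i ⊗ₜ[k] g i) :
    EA c φ a = ∑ i ∈ ix, Coalgebra.counit (R := k) (g i) • (f i : A) := by
  simp only [EA, LinearMap.comp_apply, EB_eq_sum ix f g hS, map_sum, map_smul]
  rfl

variable (hφB : ∀ (b : ↥c.coinv) (a : A),
    φ ((b : A) * a) = TensorProduct.map (LinearMap.mulLeft k b) LinearMap.id (φ a))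
  (hφH : ∀ a : A,
    (TensorProduct.assoc k (↥c.coinv) H H).symm
        (TensorProduct.map LinearMap.id Coalgebra.comul (φ a)) =
      TensorProduct.map φ.toLinearMap LinearMap.id (c.ρ a))

include hφB in
lemma symm_tmul (b : ↥c.coinv) (h : H) :
    φ.symm (b ⊗ₜ[k] h) = (b : A) * jB c φ h := by
  apply φ.injective
  rw [φ.apply_symm_apply, hφB, jB_apply, φ.apply_symm_apply, TensorProduct.map_tmul,
    LinearMap.id_coe, id_eq, LinearMap.mulLeft_apply, mul_one]

include hφB in
lemma EB_coinv_mul (b : ↥c.coinv) (a : A) :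
    EB c φ ((b : A) * a) = b * EB c φ a := by
  obtain ⟨S, hS⟩ := TensorProduct.exists_finset (φ a)
  have hS2 : φ ((b : A) * a) = ∑ p ∈ S, (b * p.1) ⊗ₜ[k] p.2 := by
    rw [hφB, hS, map_sum]
    exact Finset.sum_congr rfl fun p _ => by
      rw [TensorProduct.map_tmul, LinearMap.id_coe, id_eq, LinearMap.mulLeft_apply]
  rw [EB_eq_sum S Prod.fst Prod.snd hS, EB_eq_sum S (fun p => b * p.1) Prod.snd hS2,
    Finset.mul_sum]
  exact Finset.sum_congr rfl fun p _ => (mul_smul_comm _ _ _).symm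

lemma EB_jB (h : H) :
    EB c φ (jB c φ h) = Coalgebra.counit (R := k) h • 1 := by
  have hS : φ (jB c φ h) = (1 : ↥c.coinv) ⊗ₜ[k] h := by
    rw [jB_apply, φ.apply_symm_apply]
  have := EB_eq_sum (φ := φ) {(0 : Unit)} (fun _ => 1) (fun _ => h) (by simpa using hS)
  simpa using this

include hφH in
lemma jB_colinear (h : H) :
    c.ρ (jB c φ h) = TensorProduct.map (jB c φ) LinearMap.id (Coalgebra.comul (R := k) h) := by
  have hinj : Function.Injective
      (TensorProduct.map φ.toLinearMap (LinearMap.id : H →ₗ[k] H)) := by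
    have hmap : (TensorProduct.congr φ (LinearEquiv.refl k H)).toLinearMap =
        TensorProduct.map φ.toLinearMap LinearMap.id :=
      TensorProduct.ext' fun x y => by simp [TensorProduct.congr_tmul]
    intro x y hxy
    apply (TensorProduct.congr φ (LinearEquiv.refl k H)).injective
    show (TensorProduct.congr φ (LinearEquiv.refl k H)).toLinearMap x =
      (TensorProduct.congr φ (LinearEquiv.refl k H)).toLinearMap y
    rw [hmap]
    exact hxy
  apply hinj
  rw [← hφH (jB c φ h)]
  symm
  obtain r := Coalgebra.Repr.arbitrary k h
  have hφj : φ (jB c φ h) = (1 : ↥c.coinv) ⊗ₜ[k] h := by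
    rw [jB_apply, φ.apply_symm_apply]
  calc TensorProduct.map φ.toLinearMap LinearMap.id
        (TensorProduct.map (jB c φ) LinearMap.id (Coalgebra.comul (R := k) h))
      = ∑ i ∈ r.index, ((1 : ↥c.coinv) ⊗ₜ[k] r.left i) ⊗ₜ[k] r.right i := by
        rw [← r.eq, map_sum, map_sum]
        refine Finset.sum_congr rfl fun i _ => ?_
        simp only [TensorProduct.map_tmul, LinearMap.id_coe, id_eq,
          LinearEquiv.coe_toLinearMap, jB_apply, φ.apply_symm_apply]
    _ = (TensorProduct.assoc k (↥c.coinv) H H).symm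
          (TensorProduct.map LinearMap.id Coalgebra.comul (φ (jB c φ h))) := by
        rw [hφj, TensorProduct.map_tmul, LinearMap.id_coe, id_eq, ← r.eq,
          TensorProduct.tmul_sum, ← LinearEquiv.coe_toLinearMap, map_sum]
        exact Finset.sum_congr rfl fun i _ => by simp

include hφB hφH in
lemma sum_EA_jB {a : A} (r : c.CoRepr a) :
    ∑ i ∈ r.index, EA c φ (r.left i) * jB c φ (r.right i) = a := by
  have h0 := hφH a
  set Θ : (↥c.coinv ⊗[k] H) ⊗[k] H →ₗ[k] A :=
    LinearMap.mul' k A ∘ₗ TensorProduct.map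
      (c.coinv.val.toLinearMap ∘ₗ (TensorProduct.rid k (↥c.coinv)).toLinearMap ∘ₗ
        LinearMap.lTensor (↥c.coinv) (Coalgebra.counit (R := k))) (jB c φ) with hΘ
  have hrhs : Θ (TensorProduct.map φ.toLinearMap LinearMap.id (c.ρ a)) =
      ∑ i ∈ r.index, EA c φ (r.left i) * jB c φ (r.right i) := by
    rw [← r.eq, map_sum, map_sum]
    refine Finset.sum_congr rfl fun i _ => ?_
    simp only [hΘ, LinearMap.comp_apply, TensorProduct.map_tmul, LinearMap.mul'_apply,
      LinearMap.id_coe, id_eq, LinearEquiv.coe_toLinearMap]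
    rfl
  have hlhs : Θ ((TensorProduct.assoc k (↥c.coinv) H H).symm
      (TensorProduct.map LinearMap.id Coalgebra.comul (φ a))) = a := by
    obtain ⟨S, hS⟩ := TensorProduct.exists_finset (φ a)
    rw [hS, map_sum, ← LinearEquiv.coe_toLinearMap, map_sum, map_sum]
    have step : ∀ p ∈ S, Θ ((TensorProduct.assoc k (↥c.coinv) H H).symm.toLinearMap
        (TensorProduct.map LinearMap.id Coalgebra.comul (p.1 ⊗ₜ[k] p.2))) =
        (p.1 : A) * jB c φ p.2 := by
      intro p _
      obtain t := Coalgebra.Repr.arbitrary k p.2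
      rw [TensorProduct.map_tmul, LinearMap.id_coe, id_eq, ← t.eq,
        TensorProduct.tmul_sum, map_sum, map_sum]
      calc ∑ i ∈ t.index, Θ ((TensorProduct.assoc k (↥c.coinv) H H).symm.toLinearMap
            (p.1 ⊗ₜ[k] (t.left i ⊗ₜ[k] t.right i)))
          = ∑ i ∈ t.index, (p.1 : A) *
              (Coalgebra.counit (R := k) (t.left i) • jB c φ (t.right i)) := by
            refine Finset.sum_congr rfl fun i _ => ?_
            simp only [LinearEquiv.coe_toLinearMap, TensorProduct.assoc_symm_tmul, hΘ,
              LinearMap.comp_apply, TensorProduct.map_tmul, LinearMap.mul'_apply,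
              LinearMap.lTensor_tmul, TensorProduct.rid_tmul, Subalgebra.coe_val]
            rw [map_smul]
            rw [Algebra.smul_mul_assoc, mul_smul_comm]
            rfl
        _ = (p.1 : A) * jB c φ (∑ i ∈ t.index,
              Coalgebra.counit (R := k) (t.left i) • t.right i) := by
            rw [map_sum, Finset.mul_sum]
            exact Finset.sum_congr rfl fun i _ => by rw [map_smul]
        _ = (p.1 : A) * jB c φ p.2 := by rw [repr_sum_counit_left_smul t]
    rw [Finset.sum_congr rfl step]
    calc ∑ p ∈ S, (p.1 : A) * jB c φ p.2
        = ∑ p ∈ S, φ.symm (p.1 ⊗ₜ[k] p.2) :=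
          Finset.sum_congr rfl fun p _ => (symm_tmul hφB p.1 p.2).symm
      _ = φ.symm (φ a) := by
          rw [hS]
          exact (map_sum φ.symm.toLinearMap (fun p => p.1 ⊗ₜ[k] p.2) S).symm
      _ = a := φ.symm_apply_apply a
  rw [← hrhs, ← h0]
  exact hlhs

end Backward

end ComodAlg

namespace ComodAlg

variable {k H A : Type*} [CommRing k] [Ring H] [Bialgebra k H] [Ring A] [Algebra k A]
variable {c : ComodAlg k H A}

section BackwardGalois

variable {φ : A ≃ₗ[k] ↥c.coinv ⊗[k] H}
variable (hφB : ∀ (b : ↥c.coinv) (a : A),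
    φ ((b : A) * a) = TensorProduct.map (LinearMap.mulLeft k b) LinearMap.id (φ a))
  (hφH : ∀ a : A,
    (TensorProduct.assoc k (↥c.coinv) H H).symm
        (TensorProduct.map LinearMap.id Coalgebra.comul (φ a)) =
      TensorProduct.map φ.toLinearMap LinearMap.id (c.ρ a))
variable {e : ((A ⊗[k] A) ⧸ c.relB) ≃ₗ[k] A ⊗[k] H}
variable (hcan : e.toLinearMap ∘ₗ c.relB.mkQ = c.galoisLift)

include hcan in
lemma e_mkQ (x y : A) :
    e (c.relB.mkQ (x ⊗ₜ[k] y)) = (x ⊗ₜ[k] (1 : H)) * c.ρ y := by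
  have := LinearMap.congr_fun hcan (x ⊗ₜ[k] y)
  simp only [LinearMap.comp_apply, LinearEquiv.coe_toLinearMap] at this
  rw [this, galoisLift_tmul]

variable (c) in
/-- Multiplication `A ⊗_B A → A`. -/
noncomputable def qmulQ : ((A ⊗[k] A) ⧸ c.relB) →ₗ[k] A :=
  Submodule.liftQ _ (LinearMap.mul' k A) (by
    rw [relB, Submodule.span_le]
    rintro z ⟨a, a', b, hb, rfl⟩
    simp only [SetLike.mem_coe, LinearMap.mem_ker, map_sub, LinearMap.mul'_apply]
    exact sub_eq_zero.2 (mul_assoc a b a'))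

lemma qmulQ_mkQ (x y : A) : qmulQ c (c.relB.mkQ (x ⊗ₜ[k] y)) = x * y := rfl

include hφB in
lemma EA_coinv_mul {b : A} (hb : b ∈ c.coinv) (x : A) :
    EA c φ (b * x) = b * EA c φ x := by
  have h0 : EB c φ (((⟨b, hb⟩ : ↥c.coinv) : A) * x) = ⟨b, hb⟩ * EB c φ x :=
    EB_coinv_mul hφB ⟨b, hb⟩ x
  show (c.coinv.val.toLinearMap) (EB c φ (b * x)) = _
  rw [show (b : A) * x = ((⟨b, hb⟩ : ↥c.coinv) : A) * x from rfl, h0]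
  rfl

variable (c φ) in
/-- `x ⊗_B y ↦ x E(y)`. -/
noncomputable def qEQ (hφB : ∀ (b : ↥c.coinv) (a : A),
    φ ((b : A) * a) = TensorProduct.map (LinearMap.mulLeft k b) LinearMap.id (φ a)) :
    ((A ⊗[k] A) ⧸ c.relB) →ₗ[k] A :=
  Submodule.liftQ _ (LinearMap.mul' k A ∘ₗ LinearMap.lTensor A (EA c φ)) (by
    rw [relB, Submodule.span_le]
    rintro z ⟨a, a', b, hb, rfl⟩
    simp only [SetLike.mem_coe, LinearMap.mem_ker, map_sub, LinearMap.comp_apply,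
      LinearMap.lTensor_tmul, LinearMap.mul'_apply]
    rw [EA_coinv_mul hφB hb, mul_assoc, sub_self])

lemma qEQ_mkQ (x y : A) : qEQ c φ hφB (c.relB.mkQ (x ⊗ₜ[k] y)) = x * EA c φ y := rfl

variable (c) in
/-- `a ⊗ h ↦ ε(h) • a`. -/
noncomputable def GEmap : A ⊗[k] H →ₗ[k] A :=
  (TensorProduct.rid k A).toLinearMap ∘ₗ LinearMap.lTensor A (Coalgebra.counit (R := k))

lemma GEmap_tmul (a : A) (h : H) :
    GEmap (a ⊗ₜ[k] h) = Coalgebra.counit (R := k) h • a := by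
  simp [GEmap]

include hcan in
lemma qmulQ_eq : qmulQ c = GEmap ∘ₗ e.toLinearMap := by
  apply Submodule.linearMap_qext
  apply TensorProduct.ext'
  intro x y
  obtain r := coRepr (c := c) y
  simp only [LinearMap.comp_apply, Submodule.mkQ_apply]
  rw [show (Submodule.Quotient.mk (x ⊗ₜ[k] y) : (A ⊗[k] A) ⧸ c.relB) =
    c.relB.mkQ (x ⊗ₜ[k] y) from rfl, qmulQ_mkQ, LinearEquiv.coe_toLinearMap, e_mkQ hcan,
    rho_repr r, Finset.mul_sum]
  have : ∀ i ∈ r.index, (x ⊗ₜ[k] (1 : H)) * (r.left i ⊗ₜ[k] r.right i) =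
      (x * r.left i) ⊗ₜ[k] r.right i := fun i _ => by
    rw [Algebra.TensorProduct.tmul_mul_tmul, one_mul]
  rw [Finset.sum_congr rfl this, map_sum]
  symm
  calc ∑ i ∈ r.index, GEmap ((x * r.left i) ⊗ₜ[k] r.right i)
      = ∑ i ∈ r.index, x * (Coalgebra.counit (R := k) (r.right i) • r.left i) := by
        refine Finset.sum_congr rfl fun i _ => ?_
        rw [GEmap_tmul, mul_smul_comm]
    _ = x * y := by rw [← Finset.mul_sum, r.counit_eq]

variable (c) in
/-- Left multiplication by `x` on `A ⊗_B A`. -/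
noncomputable def LQ (x : A) : ((A ⊗[k] A) ⧸ c.relB) →ₗ[k] (A ⊗[k] A) ⧸ c.relB :=
  Submodule.liftQ _ (c.relB.mkQ ∘ₗ LinearMap.rTensor A (LinearMap.mulLeft k x)) (by
    have hsub : {z : A ⊗[k] A | ∃ a a', ∃ b ∈ c.coinv, z = (a * b) ⊗ₜ[k] a' - a ⊗ₜ[k] (b * a')}
        ⊆ ↑(LinearMap.ker (c.relB.mkQ ∘ₗ LinearMap.rTensor A (LinearMap.mulLeft k x))) := by
      rintro z ⟨a, a', b, hb, rfl⟩
      simp only [SetLike.mem_coe, LinearMap.mem_ker, map_sub, LinearMap.comp_apply,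
        LinearMap.rTensor_tmul, LinearMap.mulLeft_apply]
      rw [show x * (a * b) = (x * a) * b from (mul_assoc x a b).symm, mkQ_relB hb, sub_self]
    rw [relB]
    exact Submodule.span_le.2 hsub)

lemma LQ_mkQ (x y z : A) :
    LQ c x (c.relB.mkQ (y ⊗ₜ[k] z)) = c.relB.mkQ ((x * y) ⊗ₜ[k] z) := rfl

lemma qEQ_LQ (x : A) (z : (A ⊗[k] A) ⧸ c.relB) :
    qEQ c φ hφB (LQ c x z) = x * qEQ c φ hφB z := by
  have hmap : qEQ c φ hφB ∘ₗ LQ c x = LinearMap.mulLeft k x ∘ₗ qEQ c φ hφB := by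
    apply Submodule.linearMap_qext
    apply TensorProduct.ext'
    intro y w
    simp only [LinearMap.comp_apply, Submodule.mkQ_apply]
    rw [show (Submodule.Quotient.mk (y ⊗ₜ[k] w) : (A ⊗[k] A) ⧸ c.relB) =
      c.relB.mkQ (y ⊗ₜ[k] w) from rfl, LQ_mkQ, qEQ_mkQ, qEQ_mkQ, LinearMap.mulLeft_apply,
      mul_assoc]
  exact LinearMap.congr_fun hmap z

include hcan in
lemma e_LQ (x : A) (z : (A ⊗[k] A) ⧸ c.relB) :
    e (LQ c x z) = (x ⊗ₜ[k] (1 : H)) * e z := by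
  have hmap : e.toLinearMap ∘ₗ LQ c x =
      LinearMap.mulLeft k (x ⊗ₜ[k] (1 : H)) ∘ₗ e.toLinearMap := by
    apply Submodule.linearMap_qext
    apply TensorProduct.ext'
    intro y w
    simp only [LinearMap.comp_apply, Submodule.mkQ_apply, LinearEquiv.coe_toLinearMap,
      LinearMap.mulLeft_apply]
    rw [show (Submodule.Quotient.mk (y ⊗ₜ[k] w) : (A ⊗[k] A) ⧸ c.relB) =
      c.relB.mkQ (y ⊗ₜ[k] w) from rfl, LQ_mkQ, e_mkQ hcan, e_mkQ hcan, ← mul_assoc,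
      Algebra.TensorProduct.tmul_mul_tmul, mul_one]
  have := LinearMap.congr_fun hmap z
  simpa using this

include hcan in
lemma LQ_esymm (x : A) (w : A ⊗[k] H) :
    LQ c x (e.symm w) = e.symm ((x ⊗ₜ[k] (1 : H)) * w) := by
  apply e.injective
  rw [e_LQ hcan, e.apply_symm_apply, e.apply_symm_apply]

include hcan in
lemma esymm_rho (a : A) : e.symm (c.ρ a) = c.relB.mkQ ((1 : A) ⊗ₜ[k] a) := by
  rw [LinearEquiv.symm_apply_eq, e_mkQ hcan, Algebra.TensorProduct.one_def.symm, one_mul]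

end BackwardGalois

end ComodAlg

namespace ComodAlg

variable {k H A : Type*} [CommRing k] [Ring H] [Bialgebra k H] [Ring A] [Algebra k A]
variable {c : ComodAlg k H A}

section BackwardFinal

variable {φ : A ≃ₗ[k] ↥c.coinv ⊗[k] H}
variable (hφB : ∀ (b : ↥c.coinv) (a : A),
    φ ((b : A) * a) = TensorProduct.map (LinearMap.mulLeft k b) LinearMap.id (φ a))
  (hφH : ∀ a : A,
    (TensorProduct.assoc k (↥c.coinv) H H).symm
        (TensorProduct.map LinearMap.id Coalgebra.comul (φ a)) =
      TensorProduct.map φ.toLinearMap LinearMap.id (c.ρ a))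
variable {e : ((A ⊗[k] A) ⧸ c.relB) ≃ₗ[k] A ⊗[k] H}
variable (hcan : e.toLinearMap ∘ₗ c.relB.mkQ = c.galoisLift)

variable (c) in
/-- `x ⊗ y ↦ ∑ (x ⊗_B y⁰) ⊗ y¹`. -/
noncomputable def rr0 : A ⊗[k] A →ₗ[k] ((A ⊗[k] A) ⧸ c.relB) ⊗[k] H :=
  TensorProduct.map c.relB.mkQ LinearMap.id ∘ₗ
    (TensorProduct.assoc k A A H).symm.toLinearMap ∘ₗ LinearMap.lTensor A c.ρ

lemma rr0_tmul (x : A) {y : A} (r : c.CoRepr y) :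
    rr0 c (x ⊗ₜ[k] y) = ∑ i ∈ r.index, c.relB.mkQ (x ⊗ₜ[k] r.left i) ⊗ₜ[k] r.right i := by
  simp only [rr0, LinearMap.comp_apply, LinearMap.lTensor_tmul, rho_repr r,
    TensorProduct.tmul_sum, map_sum, LinearEquiv.coe_toLinearMap,
    TensorProduct.assoc_symm_tmul, TensorProduct.map_tmul, LinearMap.id_coe, id_eq]

variable (c) in
/-- The induced coaction on `A ⊗_B A`. -/
noncomputable def rhoQ : ((A ⊗[k] A) ⧸ c.relB) →ₗ[k] ((A ⊗[k] A) ⧸ c.relB) ⊗[k] H :=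
  Submodule.liftQ _ (rr0 c) (by
    have hsub : {z : A ⊗[k] A | ∃ a a', ∃ b ∈ c.coinv, z = (a * b) ⊗ₜ[k] a' - a ⊗ₜ[k] (b * a')}
        ⊆ ↑(LinearMap.ker (rr0 c)) := by
      rintro z ⟨a, a', b, hb, rfl⟩
      simp only [SetLike.mem_coe, LinearMap.mem_ker, map_sub]
      obtain r := coRepr (c := c) a'
      have heq : ∑ i ∈ r.index, (b * r.left i) ⊗ₜ[k] r.right i = c.ρ (b * a') := by
        rw [rho_coinv_mul hb, ← r.eq, Finset.mul_sum]
        exact Finset.sum_congr rfl fun i _ => by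
          rw [Algebra.TensorProduct.tmul_mul_tmul, one_mul]
      rw [rr0_tmul (a * b) r,
        rr0_tmul a (⟨r.index, fun i => b * r.left i, r.right, heq⟩ : c.CoRepr (b * a'))]
      show ∑ i ∈ r.index, c.relB.mkQ ((a * b) ⊗ₜ[k] r.left i) ⊗ₜ[k] r.right i -
        ∑ i ∈ r.index, c.relB.mkQ (a ⊗ₜ[k] (b * r.left i)) ⊗ₜ[k] r.right i = 0
      rw [← Finset.sum_sub_distrib]
      apply Finset.sum_eq_zero
      intro i _
      rw [← TensorProduct.sub_tmul, mkQ_relB hb, sub_self, TensorProduct.zero_tmul]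
    exact Submodule.span_le.2 hsub)

lemma rhoQ_mkQ (x : A) {y : A} (r : c.CoRepr y) :
    rhoQ c (c.relB.mkQ (x ⊗ₜ[k] y)) =
      ∑ i ∈ r.index, c.relB.mkQ (x ⊗ₜ[k] r.left i) ⊗ₜ[k] r.right i :=
  (show rhoQ c (c.relB.mkQ (x ⊗ₜ[k] y)) = rr0 c (x ⊗ₜ[k] y) from rfl).trans (rr0_tmul x r)

include hcan in
lemma e_rhoQ : TensorProduct.map e.toLinearMap LinearMap.id ∘ₗ rhoQ c =
    (TensorProduct.assoc k A H H).symm.toLinearMap ∘ₗ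
      LinearMap.lTensor A Coalgebra.comul ∘ₗ e.toLinearMap := by
  apply Submodule.linearMap_qext
  apply TensorProduct.ext'
  intro x y
  obtain r := coRepr (c := c) y
  set s := fun i => coRepr (c := c) (r.left i)
  set t := fun i => Coalgebra.Repr.arbitrary k (r.right i)
  have key := congrArg (TensorProduct.map (TensorProduct.map (LinearMap.mulLeft k x)
      LinearMap.id) LinearMap.id ∘ₗ (TensorProduct.assoc k A H H).symm.toLinearMap)
    (CoRepr.coassoc_eq r s t)
  simp only [map_sum, LinearMap.comp_apply, LinearEquiv.coe_toLinearMap,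
    TensorProduct.assoc_symm_tmul, TensorProduct.map_tmul, LinearMap.mulLeft_apply,
    LinearMap.id_coe, id_eq] at key
  have hlhs : TensorProduct.map e.toLinearMap LinearMap.id
      (rhoQ c (c.relB.mkQ (x ⊗ₜ[k] y))) = ∑ i ∈ r.index, ∑ j ∈ (s i).index,
        ((x * (s i).left j) ⊗ₜ[k] (s i).right j) ⊗ₜ[k] r.right i := by
    rw [rhoQ_mkQ x r, map_sum]
    refine Finset.sum_congr rfl fun i _ => ?_
    rw [TensorProduct.map_tmul, LinearMap.id_coe, id_eq, LinearEquiv.coe_toLinearMap,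
      e_mkQ hcan, rho_repr (s i), Finset.mul_sum, TensorProduct.sum_tmul]
    refine Finset.sum_congr rfl fun j _ => ?_
    rw [Algebra.TensorProduct.tmul_mul_tmul, one_mul]
  have hrhs : (TensorProduct.assoc k A H H).symm.toLinearMap
      (LinearMap.lTensor A Coalgebra.comul (e (c.relB.mkQ (x ⊗ₜ[k] y)))) =
      ∑ i ∈ r.index, ∑ j ∈ (t i).index,
        ((x * r.left i) ⊗ₜ[k] (t i).left j) ⊗ₜ[k] (t i).right j := by
    rw [e_mkQ hcan, rho_repr r, Finset.mul_sum]
    have hmm : ∀ i ∈ r.index, (x ⊗ₜ[k] (1 : H)) * (r.left i ⊗ₜ[k] r.right i) =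
        (x * r.left i) ⊗ₜ[k] r.right i := fun i _ => by
      rw [Algebra.TensorProduct.tmul_mul_tmul, one_mul]
    rw [Finset.sum_congr rfl hmm, map_sum, map_sum]
    refine Finset.sum_congr rfl fun i _ => ?_
    rw [LinearMap.lTensor_tmul, ← (t i).eq, TensorProduct.tmul_sum, map_sum]
    exact Finset.sum_congr rfl fun j _ => by
      rw [LinearEquiv.coe_toLinearMap, TensorProduct.assoc_symm_tmul]
  simp only [LinearMap.comp_apply]
  rw [hlhs]
  exact key.trans hrhs.symm

include hcan in
lemma delta_colinear {h : H} {ι : Type*} (r : Coalgebra.Repr k h ι) :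
    rhoQ c (e.symm ((1 : A) ⊗ₜ[k] h)) =
      ∑ i ∈ r.index, e.symm ((1 : A) ⊗ₜ[k] r.left i) ⊗ₜ[k] r.right i := by
  have hinj : Function.Injective
      (TensorProduct.map e.toLinearMap (LinearMap.id : H →ₗ[k] H)) := by
    have hmap : (TensorProduct.congr e (LinearEquiv.refl k H)).toLinearMap =
        TensorProduct.map e.toLinearMap LinearMap.id :=
      TensorProduct.ext' fun x y => by simp [TensorProduct.congr_tmul]
    intro x y hxy
    apply (TensorProduct.congr e (LinearEquiv.refl k H)).injective
    show (TensorProduct.congr e (LinearEquiv.refl k H)).toLinearMap x =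
      (TensorProduct.congr e (LinearEquiv.refl k H)).toLinearMap y
    rw [hmap]
    exact hxy
  apply hinj
  have h0 := LinearMap.congr_fun (e_rhoQ hcan) (e.symm ((1 : A) ⊗ₜ[k] h))
  simp only [LinearMap.comp_apply] at h0
  rw [h0]
  have h1 : e.toLinearMap (e.symm ((1 : A) ⊗ₜ[k] h)) = (1 : A) ⊗ₜ[k] h := by
    rw [LinearEquiv.coe_toLinearMap, e.apply_symm_apply]
  rw [h1]
  calc (TensorProduct.assoc k A H H).symm.toLinearMap
        (LinearMap.lTensor A Coalgebra.comul ((1 : A) ⊗ₜ[k] h))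
      = ∑ i ∈ r.index, ((1 : A) ⊗ₜ[k] r.left i) ⊗ₜ[k] r.right i := by
        rw [LinearMap.lTensor_tmul, ← r.eq, TensorProduct.tmul_sum, map_sum]
        exact Finset.sum_congr rfl fun i _ => by
          rw [LinearEquiv.coe_toLinearMap, TensorProduct.assoc_symm_tmul]
    _ = TensorProduct.map e.toLinearMap LinearMap.id
          (∑ i ∈ r.index, e.symm ((1 : A) ⊗ₜ[k] r.left i) ⊗ₜ[k] r.right i) := by
        rw [map_sum]
        refine Finset.sum_congr rfl fun i _ => ?_
        rw [TensorProduct.map_tmul, LinearMap.id_coe, id_eq, LinearEquiv.coe_toLinearMap,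
          e.apply_symm_apply]

variable (c φ) in
/-- `z ⊗ h ↦ q(z) * j(h)`. -/
noncomputable def WQ (hφB : ∀ (b : ↥c.coinv) (a : A),
    φ ((b : A) * a) = TensorProduct.map (LinearMap.mulLeft k b) LinearMap.id (φ a)) :
    ((A ⊗[k] A) ⧸ c.relB) ⊗[k] H →ₗ[k] A :=
  LinearMap.mul' k A ∘ₗ TensorProduct.map (qEQ c φ hφB) (jB c φ)

lemma WQ_tmul (z : (A ⊗[k] A) ⧸ c.relB) (h : H) :
    WQ c φ hφB (z ⊗ₜ[k] h) = qEQ c φ hφB z * jB c φ h := rfl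

include hφB hφH in
lemma WQ_rhoQ : WQ c φ hφB ∘ₗ rhoQ c = qmulQ c := by
  apply Submodule.linearMap_qext
  apply TensorProduct.ext'
  intro x y
  obtain r := coRepr (c := c) y
  simp only [LinearMap.comp_apply, Submodule.mkQ_apply]
  rw [show (Submodule.Quotient.mk (x ⊗ₜ[k] y) : (A ⊗[k] A) ⧸ c.relB) =
    c.relB.mkQ (x ⊗ₜ[k] y) from rfl, rhoQ_mkQ x r, qmulQ_mkQ, map_sum]
  calc ∑ i ∈ r.index, WQ c φ hφB (c.relB.mkQ (x ⊗ₜ[k] r.left i) ⊗ₜ[k] r.right i)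
      = ∑ i ∈ r.index, x * (EA c φ (r.left i) * jB c φ (r.right i)) := by
        refine Finset.sum_congr rfl fun i _ => ?_
        rw [WQ_tmul, qEQ_mkQ, mul_assoc]
    _ = x * y := by rw [← Finset.mul_sum, sum_EA_jB hφB hφH r]

variable (c φ) in
/-- The convolution inverse `h ↦ q(can⁻¹(1 ⊗ h))` of `j`. -/
noncomputable def jtB (hφB : ∀ (b : ↥c.coinv) (a : A),
      φ ((b : A) * a) = TensorProduct.map (LinearMap.mulLeft k b) LinearMap.id (φ a))
    (e2 : ((A ⊗[k] A) ⧸ c.relB) ≃ₗ[k] A ⊗[k] H) : H →ₗ[k] A :=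
  qEQ c φ hφB ∘ₗ e2.symm.toLinearMap ∘ₗ TensorProduct.mk k A H 1

lemma jtB_apply (h : H) : jtB c φ hφB e h = qEQ c φ hφB (e.symm ((1 : A) ⊗ₜ[k] h)) := rfl

include hφB hφH hcan in
lemma conv_jtB_jB : conv (jtB c φ hφB e) (jB c φ) = convOne k H A := by
  ext h
  obtain r := Coalgebra.Repr.arbitrary k h
  rw [conv_apply_repr _ _ r]
  calc ∑ i ∈ r.index, jtB c φ hφB e (r.left i) * jB c φ (r.right i)
      = WQ c φ hφB (∑ i ∈ r.index, e.symm ((1 : A) ⊗ₜ[k] r.left i) ⊗ₜ[k] r.right i) := by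
        rw [map_sum]
        exact Finset.sum_congr rfl fun i _ => (WQ_tmul hφB _ _).symm
    _ = WQ c φ hφB (rhoQ c (e.symm ((1 : A) ⊗ₜ[k] h))) := by rw [delta_colinear hcan r]
    _ = qmulQ c (e.symm ((1 : A) ⊗ₜ[k] h)) :=
        LinearMap.congr_fun (WQ_rhoQ hφB hφH) _
    _ = GEmap (e (e.symm ((1 : A) ⊗ₜ[k] h))) := by
        rw [qmulQ_eq hcan]
        rfl
    _ = convOne k H A h := by
        rw [e.apply_symm_apply, GEmap_tmul, convOne_apply,
          Algebra.algebraMap_eq_smul_one]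

include hφB hφH hcan in
lemma conv_jB_jtB : conv (jB c φ) (jtB c φ hφB e) = convOne k H A := by
  ext h
  obtain r := Coalgebra.Repr.arbitrary k h
  rw [conv_apply_repr _ _ r]
  have hmapsum : TensorProduct.map (jB c φ) LinearMap.id (Coalgebra.comul (R := k) h) =
      ∑ i ∈ r.index, jB c φ (r.left i) ⊗ₜ[k] r.right i := by
    rw [← r.eq, map_sum]
    exact Finset.sum_congr rfl fun i _ => by
      rw [TensorProduct.map_tmul, LinearMap.id_coe, id_eq]
  calc ∑ i ∈ r.index, jB c φ (r.left i) * jtB c φ hφB e (r.right i)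
      = ∑ i ∈ r.index, qEQ c φ hφB (LQ c (jB c φ (r.left i))
          (e.symm ((1 : A) ⊗ₜ[k] r.right i))) := by
        refine Finset.sum_congr rfl fun i _ => ?_
        rw [jtB_apply, qEQ_LQ]
    _ = ∑ i ∈ r.index, qEQ c φ hφB (e.symm (jB c φ (r.left i) ⊗ₜ[k] r.right i)) := by
        refine Finset.sum_congr rfl fun i _ => ?_
        rw [LQ_esymm hcan, Algebra.TensorProduct.tmul_mul_tmul, mul_one, one_mul]
    _ = qEQ c φ hφB (e.symm (∑ i ∈ r.index, jB c φ (r.left i) ⊗ₜ[k] r.right i)) := by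
        rw [← map_sum (qEQ c φ hφB)]
        congr 1
        exact (map_sum e.symm.toLinearMap _ _).symm
    _ = qEQ c φ hφB (e.symm (c.ρ (jB c φ h))) := by rw [← hmapsum, ← jB_colinear hφH]
    _ = qEQ c φ hφB (c.relB.mkQ ((1 : A) ⊗ₜ[k] jB c φ h)) := by rw [esymm_rho hcan]
    _ = EA c φ (jB c φ h) := by rw [qEQ_mkQ, one_mul]
    _ = convOne k H A h := by
        show c.coinv.val.toLinearMap (EB c φ (jB c φ h)) = _
        rw [EB_jB, map_smul, convOne_apply, Algebra.algebraMap_eq_smul_one]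
        rfl

end BackwardFinal

end ComodAlg

/-- A right `H`-extension `B ⊆ A` is cleft if and only if it is `H`-Galois (the
canonical map `A ⊗_B A → A ⊗ H` is bijective) and has the normal basis property
(`A ≅ B ⊗ H` as left `B`-modules and right `H`-comodules). -/
theorem cleft_iff_galois_and_normal_basis
    {k H A : Type*} [CommRing k] [Ring H] [HopfAlgebra k H] [Ring A] [Algebra k A]
    (c : ComodAlg k H A) :
    -- the extension is cleft
    (∃ j jt : H →ₗ[k] A,
      (∀ h : H, c.ρ (j h) =
        TensorProduct.map j LinearMap.id (Coalgebra.comul (R := k) h)) ∧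
      conv j jt = convOne k H A ∧ conv jt j = convOne k H A) ↔
    -- the extension is `H`-Galois
    ((∃ can : ((A ⊗[k] A) ⧸ c.relB) →ₗ[k] A ⊗[k] H,
        can ∘ₗ c.relB.mkQ = c.galoisLift ∧ Function.Bijective can) ∧
     -- and has the normal basis property
     (∃ φ : A ≃ₗ[k] ↥c.coinv ⊗[k] H,
        (∀ (b : ↥c.coinv) (a : A),
          φ ((b : A) * a) =
            TensorProduct.map (LinearMap.mulLeft k b) LinearMap.id (φ a)) ∧
        (∀ a : A,
          (TensorProduct.assoc k (↥c.coinv) H H).symm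
              (TensorProduct.map LinearMap.id Coalgebra.comul (φ a)) =
            TensorProduct.map φ.toLinearMap LinearMap.id (c.ρ a)))) := by
  constructor
  · rintro ⟨j, jt, hj, h1, h2⟩
    have hmem : ∀ a : A, ComodAlg.kappa c jt a ∈ c.coinv :=
      ComodAlg.kappa_mem_coinv hj h1 h2
    set can := Submodule.liftQ c.relB c.galoisLift ComodAlg.relB_le_ker with hcan
    set inv := c.relB.mkQ ∘ₗ ComodAlg.galoisInvLift jt j with hinv
    have hci : can ∘ₗ inv = LinearMap.id := by
      apply TensorProduct.ext'
      intro a h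
      simp only [LinearMap.comp_apply, hinv, hcan, Submodule.liftQ_apply,
        LinearMap.id_coe, id_eq]
      exact ComodAlg.can_inv j jt hj h2 a h
    have hic : inv ∘ₗ can = LinearMap.id := by
      apply Submodule.linearMap_qext
      apply LinearMap.ext
      intro w
      simp only [LinearMap.comp_apply, hinv, hcan, Submodule.mkQ_apply,
        Submodule.liftQ_apply, LinearMap.id_coe, id_eq]
      exact ComodAlg.inv_can j jt hj h1 h2 w
    have hbij : Function.Bijective can :=
      Function.bijective_iff_has_inverse.2 ⟨inv,
        fun x => by rw [← LinearMap.comp_apply, hic, LinearMap.id_apply],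
        fun y => by rw [← LinearMap.comp_apply, hci, LinearMap.id_apply]⟩
    refine ⟨⟨can, Submodule.liftQ_mkQ _ _ _, hbij⟩, ?_⟩
    set φ := LinearEquiv.ofLinear (ComodAlg.phiF c jt hmem) (ComodAlg.psiF c j)
      (TensorProduct.ext' (ComodAlg.phiF_psiF j jt hj h1 hmem))
      (LinearMap.ext (ComodAlg.psiF_phiF j jt h2 hmem)) with hφ
    refine ⟨φ, fun b a => ?_, fun a => ?_⟩
    · simp only [hφ, LinearEquiv.ofLinear_apply]
      exact ComodAlg.phiF_coinv_mul j jt hj h1 hmem b a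
    · have : φ.toLinearMap = ComodAlg.phiF c jt hmem := rfl
      rw [this]
      simp only [hφ, LinearEquiv.ofLinear_apply]
      exact ComodAlg.phiF_colinear jt hmem a
  · rintro ⟨⟨can, hcan0, hbij⟩, φ, hφB, hφH⟩
    set e := LinearEquiv.ofBijective can hbij with he
    have hcan : e.toLinearMap ∘ₗ c.relB.mkQ = c.galoisLift := hcan0
    exact ⟨ComodAlg.jB c φ, ComodAlg.jtB c φ hφB e,
      fun h => ComodAlg.jB_colinear hφH h,
      ComodAlg.conv_jB_jtB hφB hφH hcan,
      ComodAlg.conv_jtB_jB hφB hφH hcan⟩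
end

section
/- Let H be a Hopf algebra over k, B ⊆ A a cleft right H-extension with cleaving map j and convolution inverse j̃. Then for every a ∈ A the element Σ a⁰ j̃(a¹) is coinvariant, i.e. belongs to B. -/
open TensorProduct

/-!
The coaction `ρ` is an algebra map, so `ρ ∘ j̃` is a right convolution inverse of `ρ ∘ j` in
`Hom(H, A ⊗ H)`. Colinearity of `j` says `ρ ∘ j = (j ⊗ 1) * (1 ⊗ id)`, so `(1 ⊗ S) * (j̃ ⊗ 1)` is a
left inverse of it; hence `ρ(j̃ h) = ∑ j̃(h₂) ⊗ S(h₁)`.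

The convolution algebra `Hom(H, D)` acts on `Hom(A, D)` by `(Φ ⋆ F)(a) = ∑ Φ(a⁰) F(a¹)`, an action
by coassociativity of `ρ`. With `P = id ⋆ j̃` and `ρ = (- ⊗ 1) ⋆ (1 ⊗ id)`,
`ρ ∘ P = (- ⊗ 1) ⋆ ((1 ⊗ id) * (1 ⊗ S) * (j̃ ⊗ 1)) = (- ⊗ 1) ⋆ (j̃ ⊗ 1) = P(-) ⊗ 1`.
-/

open WithConv Algebra.TensorProduct

namespace AlgHom

variable {R C A B : Type*} [CommSemiring R] [AddCommMonoid C] [Module R C] [Coalgebra R C]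
  [Semiring A] [Algebra R A] [Semiring B] [Algebra R B]

noncomputable def mapConv (ψ : A →ₐ[R] B) : WithConv (C →ₗ[R] A) →+* WithConv (C →ₗ[R] B) where
  toFun f := toConv (ψ.toLinearMap ∘ₗ f.ofConv)
  map_one' := by ext; simp
  map_mul' f g := by ext1; exact LinearMap.algHom_comp_convMul_distrib ψ f g
  map_zero' := by ext; simp
  map_add' f g := by ext; simp

@[simp] lemma ofConv_mapConv (ψ : A →ₐ[R] B) (f : WithConv (C →ₗ[R] A)) :
    (ψ.mapConv f).ofConv = ψ.toLinearMap ∘ₗ f.ofConv := rfl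

end AlgHom

section
variable {R C A B : Type*} [CommSemiring R] [AddCommMonoid C] [Module R C] [Coalgebra R C]
  [Semiring A] [Algebra R A] [Semiring B] [Algebra R B]

lemma mul'_comp_map_includeLeft_includeRight :
    LinearMap.mul' R (A ⊗[R] B) ∘ₗ
      TensorProduct.map (includeLeft : A →ₐ[R] A ⊗[R] B).toLinearMap includeRight.toLinearMap =
      LinearMap.id := by
  ext; simp

lemma mapConv_includeLeft_mul_mapConv_includeRight (f : C →ₗ[R] A) (g : C →ₗ[R] B) :
    includeLeft.mapConv (toConv f) * includeRight.mapConv (toConv g) =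
      toConv (TensorProduct.map f g ∘ₗ Coalgebra.comul) := by
  ext1
  simp only [LinearMap.convMul_def, AlgHom.ofConv_mapConv, TensorProduct.map_comp,
    ← LinearMap.comp_assoc, mul'_comp_map_includeLeft_includeRight, LinearMap.id_comp]

end

section
variable {R C M D : Type*} [CommSemiring R] [AddCommMonoid C] [Module R C]
  [CoalgebraStruct R C] [AddCommMonoid M] [Module R M] [Semiring D] [Algebra R D]

noncomputable def convAct (ρ : M →ₗ[R] M ⊗[R] C) (Φ : M →ₗ[R] D) (F : WithConv (C →ₗ[R] D)) :
    M →ₗ[R] D :=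
  LinearMap.mul' R D ∘ₗ TensorProduct.map Φ F.ofConv ∘ₗ ρ

lemma convAct_convAct {ρ : M →ₗ[R] M ⊗[R] C}
    (hρ : ∀ m, TensorProduct.assoc R M C C (TensorProduct.map ρ LinearMap.id (ρ m)) =
      TensorProduct.map LinearMap.id Coalgebra.comul (ρ m))
    (Φ : M →ₗ[R] D) (F G : WithConv (C →ₗ[R] D)) :
    convAct ρ (convAct ρ Φ F) G = convAct ρ Φ (F * G) := by
  have hassoc : LinearMap.mul' R D ∘ₗ (LinearMap.mul' R D).rTensor D ∘ₗ
        TensorProduct.map (TensorProduct.map Φ F.ofConv) G.ofConv =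
      LinearMap.mul' R D ∘ₗ (LinearMap.mul' R D).lTensor D ∘ₗ
        TensorProduct.map Φ (TensorProduct.map F.ofConv G.ofConv) ∘ₗ
        (TensorProduct.assoc R M C C).toLinearMap := by
    ext; simp [mul_assoc]
  have hρ' : (TensorProduct.assoc R M C C).toLinearMap ∘ₗ ρ.rTensor C ∘ₗ ρ =
      Coalgebra.comul.lTensor M ∘ₗ ρ :=
    LinearMap.ext hρ
  have hleft : TensorProduct.map (convAct ρ Φ F) G.ofConv = (LinearMap.mul' R D).rTensor D ∘ₗ
      TensorProduct.map (TensorProduct.map Φ F.ofConv) G.ofConv ∘ₗ ρ.rTensor C := by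
    rw [LinearMap.map_comp_rTensor, LinearMap.rTensor_comp_map, convAct]
  have hright : TensorProduct.map Φ (F * G).ofConv = (LinearMap.mul' R D).lTensor D ∘ₗ
      TensorProduct.map Φ (TensorProduct.map F.ofConv G.ofConv) ∘ₗ Coalgebra.comul.lTensor M := by
    rw [LinearMap.map_comp_lTensor, LinearMap.lTensor_comp_map, LinearMap.convMul_def]
  calc convAct ρ (convAct ρ Φ F) G
      = (LinearMap.mul' R D ∘ₗ (LinearMap.mul' R D).rTensor D ∘ₗ
          TensorProduct.map (TensorProduct.map Φ F.ofConv) G.ofConv) ∘ₗ ρ.rTensor C ∘ₗ ρ := by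
        rw [convAct, hleft]
        simp only [LinearMap.comp_assoc]
    _ = convAct ρ Φ (F * G) := by
        rw [hassoc]
        simp only [LinearMap.comp_assoc, hρ']
        rw [convAct, hright]
        simp only [LinearMap.comp_assoc]

end

section
variable {R C M D D' : Type*} [CommSemiring R] [AddCommMonoid C] [Module R C]
  [Coalgebra R C] [AddCommMonoid M] [Module R M] [Semiring D] [Algebra R D]
  [Semiring D'] [Algebra R D']

lemma AlgHom.comp_convAct (ψ : D →ₐ[R] D') (ρ : M →ₗ[R] M ⊗[R] C) (Φ : M →ₗ[R] D)
    (F : WithConv (C →ₗ[R] D)) :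
    ψ.toLinearMap ∘ₗ convAct ρ Φ F = convAct ρ (ψ.toLinearMap ∘ₗ Φ) (ψ.mapConv F) := by
  simp only [convAct, AlgHom.ofConv_mapConv, TensorProduct.map_comp, ← LinearMap.comp_assoc,
    AlgHom.comp_mul']

end

section
variable {R A H : Type*} [CommSemiring R] [Semiring A] [Algebra R A] [Semiring H]

lemma convAct_includeLeft_includeRight [Bialgebra R H] (ρ : A →ₗ[R] A ⊗[R] H) :
    convAct ρ includeLeft.toLinearMap (includeRight.mapConv (toConv LinearMap.id)) = ρ := by
  rw [convAct, AlgHom.ofConv_mapConv, LinearMap.comp_id, ← LinearMap.comp_assoc,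
    mul'_comp_map_includeLeft_includeRight, LinearMap.id_comp]

theorem AlgHom.mapConv_inverse_eq_antipode_mul_of_colinear [HopfAlgebra R H]
    (φ : A →ₐ[R] A ⊗[R] H) {j jt : WithConv (H →ₗ[R] A)}
    (hcolin : φ.mapConv j = includeLeft.mapConv j * includeRight.mapConv (toConv LinearMap.id))
    (hj1 : j * jt = 1) (hj2 : jt * j = 1) :
    φ.mapConv jt =
      includeRight.mapConv (toConv (HopfAlgebra.antipode R)) * includeLeft.mapConv jt := by
  refine (left_inv_eq_right_inv (a := φ.mapConv j) ?_ ?_).symm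
  · rw [hcolin, mul_assoc, ← mul_assoc (includeLeft.mapConv jt), ← map_mul, hj2, map_one,
      one_mul, ← map_mul, LinearMap.antipode_mul_id, map_one]
  · rw [← map_mul, hj1, map_one]

end

namespace ComodAlg
variable {k H A : Type*} [CommRing k] [Ring H] [Bialgebra k H] [Ring A] [Algebra k A]

noncomputable def toAlgHom (c : ComodAlg k H A) : A →ₐ[k] A ⊗[k] H :=
  AlgHom.ofLinearMap c.ρ c.map_one c.map_mul

end ComodAlg

/-- For a cleft extension `B ⊆ A` with cleaving map `j` and convolution inverse `j̃`,
the element `∑ a⁰ j̃(a¹)` is coinvariant for every `a ∈ A`. -/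
theorem cleft_coinvariant
    {k H A : Type*} [CommRing k] [Ring H] [HopfAlgebra k H] [Ring A] [Algebra k A]
    (c : ComodAlg k H A) (j jt : H →ₗ[k] A)
    -- `j` is a cleaving map with convolution inverse `jt`
    (hcolin : ∀ h : H, c.ρ (j h) =
      TensorProduct.map j LinearMap.id (Coalgebra.comul (R := k) h))
    (hj1 : conv j jt = convOne k H A) (hj2 : conv jt j = convOne k H A) :
    ∀ a : A,
      LinearMap.mul' k A (TensorProduct.map LinearMap.id jt (c.ρ a)) ∈ c.coinv := by
  have hj : c.toAlgHom.mapConv (toConv j) =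
      includeLeft.mapConv (toConv j) * includeRight.mapConv (toConv LinearMap.id) := by
    rw [mapConv_includeLeft_mul_mapConv_includeRight]
    exact WithConv.ext (LinearMap.ext hcolin)
  have hjt := c.toAlgHom.mapConv_inverse_eq_antipode_mul_of_colinear hj
    (WithConv.ext hj1) (WithConv.ext hj2)
  set P := convAct c.ρ LinearMap.id (toConv jt)
  suffices c.ρ ∘ₗ P = includeLeft.toLinearMap ∘ₗ P from fun a => LinearMap.congr_fun this a
  calc c.ρ ∘ₗ P = convAct c.ρ c.ρ (c.toAlgHom.mapConv (toConv jt)) :=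
        c.toAlgHom.comp_convAct c.ρ LinearMap.id (toConv jt)
    _ = convAct c.ρ
          (convAct c.ρ includeLeft.toLinearMap (includeRight.mapConv (toConv LinearMap.id)))
          (c.toAlgHom.mapConv (toConv jt)) := by
        rw [convAct_includeLeft_includeRight]
    _ = convAct c.ρ includeLeft.toLinearMap (includeLeft.mapConv (toConv jt)) := by
        rw [convAct_convAct c.coassoc, hjt, ← mul_assoc, ← map_mul, LinearMap.id_mul_antipode,
          map_one, one_mul]
    _ = includeLeft.toLinearMap ∘ₗ P := by
        rw [AlgHom.comp_convAct, LinearMap.comp_id]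
end

section
/- Let H be a Hopf algebra over k with antipode S, and B ⊆ A a cleft right H-extension with cleaving map j and convolution inverse j̃. Then j̃ satisfies ρ(j̃(h)) = Σ j̃(h₂) ⊗ S(h₁) for all h ∈ H, where ρ is the comodule coaction of A. -/
open TensorProduct

/-! In the convolution algebra `Hom_k(H, A ⊗ H)`, `ρ ∘ j̃` is the inverse of `ρ ∘ j` because `ρ`
is an algebra map. Colinearity of `j` factors `ρ ∘ j` as the product of `h ↦ j(h) ⊗ 1` and
`h ↦ 1 ⊗ h`, which has the left inverse `(h ↦ 1 ⊗ S(h)) * (h ↦ j̃(h) ⊗ 1)`; hence this product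
is `ρ ∘ j̃`, and it sends `h` to `∑ j̃(h₂) ⊗ S(h₁)`. -/

open WithConv Coalgebra

namespace LinearMap

variable {R C A B : Type*} [CommSemiring R] [AddCommMonoid C] [Module R C] [Coalgebra R C]
  [Semiring A] [Algebra R A] [Semiring B] [Algebra R B]

lemma algHom_comp_convMul_eq_one (φ : A →ₐ[R] B) {f g : C →ₗ[R] A}
    (hfg : toConv f * toConv g = 1) :
    toConv (φ.toLinearMap ∘ₗ f) * toConv (φ.toLinearMap ∘ₗ g) = 1 := by
  rw [← toConv_ofConv (_ * _), ← algHom_comp_convMul_distrib, hfg]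
  ext; simp

lemma includeLeft_comp_convMul_includeRight_comp (f : C →ₗ[R] A) (g : C →ₗ[R] B) :
    toConv (Algebra.TensorProduct.includeLeft.toLinearMap ∘ₗ f) *
        toConv (Algebra.TensorProduct.includeRight.toLinearMap ∘ₗ g) =
      toConv (TensorProduct.map f g ∘ₗ comul) := by
  ext x
  simp [(ℛ R x).convMul_apply, ← (ℛ R x).eq]

lemma includeRight_comp_convMul_includeLeft_comp (f : C →ₗ[R] A) (g : C →ₗ[R] B) :
    toConv (Algebra.TensorProduct.includeRight.toLinearMap ∘ₗ g) *
        toConv (Algebra.TensorProduct.includeLeft.toLinearMap ∘ₗ f) =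
      toConv (TensorProduct.map f g ∘ₗ (TensorProduct.comm R C C).toLinearMap ∘ₗ comul) := by
  ext x
  simp [(ℛ R x).convMul_apply, ← (ℛ R x).eq]

end LinearMap

def ComodAlg.coactionAlgHom {k H A : Type*} [CommRing k] [Ring H] [Bialgebra k H] [Ring A]
    [Algebra k A] (c : ComodAlg k H A) : A →ₐ[k] A ⊗[k] H :=
  .ofLinearMap c.ρ c.map_one c.map_mul

/-- For a cleft extension with cleaving map `j` and convolution inverse `j̃`, the
coaction of `j̃(h)` is `∑ j̃(h₂) ⊗ S(h₁)`. -/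
theorem cleft_inverse_coaction
    {k H A : Type*} [CommRing k] [Ring H] [HopfAlgebra k H] [Ring A] [Algebra k A]
    (c : ComodAlg k H A) (j jt : H →ₗ[k] A)
    (hcolin : ∀ h : H, c.ρ (j h) =
      TensorProduct.map j LinearMap.id (Coalgebra.comul (R := k) h))
    (hj1 : conv j jt = convOne k H A) (hj2 : conv jt j = convOne k H A) :
    ∀ h : H, c.ρ (jt h) =
      TensorProduct.map jt (HopfAlgebra.antipode (R := k))
        (TensorProduct.comm k H H (Coalgebra.comul (R := k) h)) := by
  let ρ := c.coactionAlgHom.toLinearMap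
  let ιA := (Algebra.TensorProduct.includeLeft : A →ₐ[k] A ⊗[k] H).toLinearMap
  let ιH := (Algebra.TensorProduct.includeRight : H →ₐ[k] A ⊗[k] H).toLinearMap
  have hρj : toConv (ρ ∘ₗ j) = toConv (ιA ∘ₗ j) * toConv (ιH ∘ₗ LinearMap.id) := by
    rw [LinearMap.includeLeft_comp_convMul_includeRight_comp]
    ext h
    exact hcolin h
  have hρ : toConv (ρ ∘ₗ j) * toConv (ρ ∘ₗ jt) = 1 :=
    LinearMap.algHom_comp_convMul_eq_one _ congr(toConv $hj1)
  have hιA : toConv (ιA ∘ₗ jt) * toConv (ιA ∘ₗ j) = 1 :=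
    LinearMap.algHom_comp_convMul_eq_one _ congr(toConv $hj2)
  have hιH : toConv (ιH ∘ₗ HopfAlgebra.antipode k) * toConv (ιH ∘ₗ LinearMap.id) = 1 :=
    LinearMap.algHom_comp_convMul_eq_one _ LinearMap.antipode_mul_id
  have hinv : toConv (ιH ∘ₗ HopfAlgebra.antipode k) * toConv (ιA ∘ₗ jt) = toConv (ρ ∘ₗ jt) := by
    refine left_inv_eq_right_inv ?_ hρ
    rw [hρj, mul_assoc, ← mul_assoc _ (toConv (ιA ∘ₗ j)), hιA, one_mul, hιH]
  rw [LinearMap.includeRight_comp_convMul_includeLeft_comp] at hinv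
  intro h
  exact congr($hinv h).symm
end

section
/- Let H be a Hopf algebra over k, B ⊆ A a right H-extension, T a subalgebra of B, and ϑ : H → A a left total T-integral, i.e. a k-linear map with ϑ(1) = 1, with image contained in the commutant A^T = {a : ta = at for all t ∈ T}, and colinear in the sense that ρ(ϑ(h)) = Σ ϑ(h₂) ⊗ S(h₁). Then the map φ : A → A, φ(a) = Σ a⁰ ϑ(a¹), takes values in B, restricts to the identity on B, and is a B-T bimodule map; hence the inclusion B ⊆ A splits as a map of B-T bimodules. -/
open TensorProduct

/-!
Colinearity of `ϑ` says that, in the convolution algebra of linear maps `H → A ⊗ H`,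
`ρ ∘ ϑ = (1 ⊗ S) * (ϑ ⊗ 1)`. Since `h ↦ 1 ⊗ h` is an algebra map, `(1 ⊗ id) * (1 ⊗ S) = 1`, hence
`∑ (1 ⊗ h₁) ρ(ϑ h₂) = ϑ h ⊗ 1`. By multiplicativity and coassociativity of `ρ`,
`ρ(φ a) = ∑ ρ(a⁰) ρ(ϑ a¹) = ∑ (a⁰ ⊗ a¹) ρ(ϑ a²)`, which the previous identity collapses to
`∑ a⁰ ϑ(a¹) ⊗ 1 = φ a ⊗ 1`.
-/

open Coalgebra HopfAlgebra WithConv Algebra.TensorProduct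

namespace LinearMap

section HopfAlgebra

variable {R H C : Type*} [CommSemiring R] [Semiring H] [HopfAlgebra R H] [Semiring C]
  [Algebra R C]

lemma algHom_mul_algHom_comp_antipode (i : H →ₐ[R] C) :
    toConv i.toLinearMap * toConv (i.toLinearMap ∘ₗ antipode R) = 1 := by
  have := algHom_comp_convMul_distrib i (toConv LinearMap.id) (toConv (antipode R (A := H)))
  rw [id_mul_antipode] at this
  ext h
  simpa using (congr($this h)).symm

end HopfAlgebra

section Algebra

variable {R A H : Type*} [CommSemiring R] [Semiring A] [Algebra R A] [Semiring H] [Algebra R H]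

lemma mul'_lTensor_tmul_one_mul (f : H →ₗ[R] A) (b : A) (z : A ⊗[R] H) :
    mul' R A (f.lTensor A ((b ⊗ₜ 1) * z)) = b * mul' R A (f.lTensor A z) := by
  induction z using TensorProduct.induction_on with
  | zero => simp
  | tmul a h => simp [mul_assoc]
  | add x y hx hy => simp only [mul_add, map_add, hx, hy]

lemma mul'_lTensor_mul_tmul_one (f : H →ₗ[R] A) {t : A} (ht : ∀ h, t * f h = f h * t)
    (z : A ⊗[R] H) :
    mul' R A (f.lTensor A (z * (t ⊗ₜ 1))) = mul' R A (f.lTensor A z) * t := by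
  induction z using TensorProduct.induction_on with
  | zero => simp
  | tmul a h => simp [mul_assoc, ht]
  | add x y hx hy => simp only [add_mul, map_add, hx, hy]

end Algebra

end LinearMap

namespace ComodAlg

variable {k H A : Type*} [CommRing k] [Ring H] [Ring A] [Algebra k A]

section Bialgebra

variable [Bialgebra k H] (c : ComodAlg k H A)

lemma rTensor_ρ_comp_ρ : c.ρ.rTensor H ∘ₗ c.ρ =
    (TensorProduct.assoc k A H H).symm.toLinearMap ∘ₗ comul.lTensor A ∘ₗ c.ρ := by
  ext a
  exact (LinearEquiv.eq_symm_apply _).mpr (c.coassoc a)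

lemma ρ_comp_mul'_comp_lTensor (ϑ : H →ₗ[k] A) :
    c.ρ ∘ₗ LinearMap.mul' k A ∘ₗ ϑ.lTensor A =
      LinearMap.mul' k (A ⊗[k] H) ∘ₗ (c.ρ ∘ₗ ϑ).lTensor (A ⊗[k] H) ∘ₗ c.ρ.rTensor H := by
  ext a h
  simp [c.map_mul]

noncomputable def averagingMap (ϑ : H →ₗ[k] A) : A →ₗ[k] A :=
  LinearMap.mul' k A ∘ₗ ϑ.lTensor A ∘ₗ c.ρ

variable {c} {ϑ : H →ₗ[k] A}

lemma averagingMap_of_mem_coinv (hϑ1 : ϑ 1 = 1) {b : A} (hb : b ∈ c.coinv) :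
    c.averagingMap ϑ b = b := by
  simp [averagingMap, show c.ρ b = b ⊗ₜ 1 from hb, hϑ1]

lemma averagingMap_coinv_mul {b : A} (hb : b ∈ c.coinv) (a : A) :
    c.averagingMap ϑ (b * a) = b * c.averagingMap ϑ a := by
  rw [averagingMap, LinearMap.comp_apply, LinearMap.comp_apply, c.map_mul,
    show c.ρ b = b ⊗ₜ 1 from hb, LinearMap.mul'_lTensor_tmul_one_mul]
  rfl

lemma averagingMap_mul_coinv {t : A} (ht : t ∈ c.coinv) (htϑ : ∀ h, t * ϑ h = ϑ h * t)
    (a : A) :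
    c.averagingMap ϑ (a * t) = c.averagingMap ϑ a * t := by
  rw [averagingMap, LinearMap.comp_apply, LinearMap.comp_apply, c.map_mul,
    show c.ρ t = t ⊗ₜ 1 from ht, LinearMap.mul'_lTensor_mul_tmul_one ϑ htϑ]
  rfl

end Bialgebra

variable [HopfAlgebra k H]

def IsColinear (c : ComodAlg k H A) (ϑ : H →ₗ[k] A) : Prop :=
  ∀ h : H, c.ρ (ϑ h) = TensorProduct.map ϑ (antipode k) (TensorProduct.comm k H H (comul h))

variable {c : ComodAlg k H A} {ϑ : H →ₗ[k] A}

lemma toConv_ρ_comp_eq_mul (hϑ : c.IsColinear ϑ) :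
    toConv (c.ρ ∘ₗ ϑ) = toConv ((includeRight : H →ₐ[k] A ⊗[k] H).toLinearMap ∘ₗ antipode k) *
      toConv ((includeLeft : A →ₐ[k] A ⊗[k] H).toLinearMap ∘ₗ ϑ) := by
  have : LinearMap.mul' k (A ⊗[k] H) ∘ₗ TensorProduct.map
      ((includeRight : H →ₐ[k] A ⊗[k] H).toLinearMap ∘ₗ antipode k)
      ((includeLeft : A →ₐ[k] A ⊗[k] H).toLinearMap ∘ₗ ϑ) =
      TensorProduct.map ϑ (antipode k) ∘ₗ (TensorProduct.comm k H H).toLinearMap := by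
    ext x y
    simp
  ext h
  rw [LinearMap.convMul_apply]
  exact (hϑ h).trans (LinearMap.congr_fun this (comul h)).symm

lemma includeRight_mul_toConv_ρ_comp (hϑ : c.IsColinear ϑ) :
    toConv (includeRight : H →ₐ[k] A ⊗[k] H).toLinearMap * toConv (c.ρ ∘ₗ ϑ) =
      toConv ((includeLeft : A →ₐ[k] A ⊗[k] H).toLinearMap ∘ₗ ϑ) := by
  rw [toConv_ρ_comp_eq_mul hϑ, ← mul_assoc, LinearMap.algHom_mul_algHom_comp_antipode, one_mul]

lemma ρ_comp_averagingMap (hϑ : c.IsColinear ϑ) :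
    c.ρ ∘ₗ c.averagingMap ϑ =
      (includeLeft : A →ₐ[k] A ⊗[k] H).toLinearMap ∘ₗ c.averagingMap ϑ := by
  set iL := (includeLeft : A →ₐ[k] A ⊗[k] H).toLinearMap
  set iR := (includeRight : H →ₐ[k] A ⊗[k] H).toLinearMap
  have hsplit : LinearMap.mul' k (A ⊗[k] H) ∘ₗ (c.ρ ∘ₗ ϑ).lTensor (A ⊗[k] H) ∘ₗ
        (TensorProduct.assoc k A H H).symm.toLinearMap =
      LinearMap.mul' k (A ⊗[k] H) ∘ₗ TensorProduct.map iL
        (LinearMap.mul' k (A ⊗[k] H) ∘ₗ TensorProduct.map iR (c.ρ ∘ₗ ϑ)) := by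
    ext a x y
    simp [iL, iR, ← mul_assoc]
  have hkey : LinearMap.mul' k (A ⊗[k] H) ∘ₗ TensorProduct.map iR (c.ρ ∘ₗ ϑ) ∘ₗ comul =
      iL ∘ₗ ϑ :=
    congr(ofConv $(includeRight_mul_toConv_ρ_comp hϑ))
  calc c.ρ ∘ₗ c.averagingMap ϑ
      = LinearMap.mul' k (A ⊗[k] H) ∘ₗ (c.ρ ∘ₗ ϑ).lTensor (A ⊗[k] H) ∘ₗ c.ρ.rTensor H ∘ₗ c.ρ := by
        simp only [averagingMap, ← LinearMap.comp_assoc, c.ρ_comp_mul'_comp_lTensor]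
    _ = LinearMap.mul' k (A ⊗[k] H) ∘ₗ (c.ρ ∘ₗ ϑ).lTensor (A ⊗[k] H) ∘ₗ
          (TensorProduct.assoc k A H H).symm.toLinearMap ∘ₗ comul.lTensor A ∘ₗ c.ρ := by
        rw [c.rTensor_ρ_comp_ρ]
    _ = LinearMap.mul' k (A ⊗[k] H) ∘ₗ TensorProduct.map iL (iL ∘ₗ ϑ) ∘ₗ c.ρ := by
        simp only [← LinearMap.comp_assoc, hsplit]
        simp only [LinearMap.comp_assoc, LinearMap.map_comp_lTensor, hkey]
    _ = iL ∘ₗ c.averagingMap ϑ := by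
        simp only [averagingMap, iL, ← LinearMap.comp_assoc, AlgHom.comp_mul']
        simp only [LinearMap.comp_assoc, LinearMap.map_comp_lTensor]

lemma averagingMap_mem_coinv (hϑ : c.IsColinear ϑ) (a : A) : c.averagingMap ϑ a ∈ c.coinv :=
  LinearMap.congr_fun (ρ_comp_averagingMap hϑ) a

end ComodAlg

/-- A left total `T`-integral `ϑ` for a right `H`-extension `B ⊆ A` induces a
`B`-`T` bimodule retraction `a ↦ ∑ a⁰ ϑ(a¹)` of the inclusion `B ⊆ A`. -/
theorem total_integral_gives_bimodule_splitting
    {k H A : Type*} [CommRing k] [Ring H] [HopfAlgebra k H] [Ring A] [Algebra k A]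
    (c : ComodAlg k H A) (T : Subalgebra k A) (hT : T ≤ c.coinv)
    (ϑ : H →ₗ[k] A)
    -- `ϑ` is a left total `T`-integral
    (hϑ1 : ϑ 1 = 1)
    (hϑT : ∀ (h : H), ∀ t ∈ T, t * ϑ h = ϑ h * t)
    (hϑcolin : ∀ h : H, c.ρ (ϑ h) =
      TensorProduct.map ϑ (HopfAlgebra.antipode (R := k))
        (TensorProduct.comm k H H (Coalgebra.comul (R := k) h))) :
    -- `φ(a) = ∑ a⁰ ϑ(a¹)` takes values in `B`
    (∀ a : A, LinearMap.mul' k A (TensorProduct.map LinearMap.id ϑ (c.ρ a)) ∈ c.coinv) ∧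
    -- `φ` restricts to the identity on `B`
    (∀ b ∈ c.coinv,
      LinearMap.mul' k A (TensorProduct.map LinearMap.id ϑ (c.ρ b)) = b) ∧
    -- `φ` is left `B`-linear
    (∀ b ∈ c.coinv, ∀ a : A,
      LinearMap.mul' k A (TensorProduct.map LinearMap.id ϑ (c.ρ (b * a))) =
        b * LinearMap.mul' k A (TensorProduct.map LinearMap.id ϑ (c.ρ a))) ∧
    -- `φ` is right `T`-linear
    (∀ t ∈ T, ∀ a : A,
      LinearMap.mul' k A (TensorProduct.map LinearMap.id ϑ (c.ρ (a * t))) =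
        LinearMap.mul' k A (TensorProduct.map LinearMap.id ϑ (c.ρ a)) * t) :=
  ⟨ComodAlg.averagingMap_mem_coinv hϑcolin,
    fun _ hb => ComodAlg.averagingMap_of_mem_coinv hϑ1 hb,
    fun _ hb => ComodAlg.averagingMap_coinv_mul hb,
    fun t ht => ComodAlg.averagingMap_mul_coinv (hT ht) (hϑT · t ht)⟩
end
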